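/- arXiv:2509.22905 — 8 statements merged into one kernel-verified Lean document; each statement's English description precedes it below -/
import Mathlib

section
/- On a probability space let X take values in a finite set 𝒳, and let A ∈ {0,1} and Δ ∈ {0,1} be random variables with b(x) = P(A=1|X=x) ∈ (0,1) and c(a,x) = P(Δ=1|A=a,X=x) ∈ (0,1) for every x with P(X=x) > 0. Suppose the weight function w(δ,a,x) satisfies the balancing property at every such x. Then for every bounded function u : 𝒳 → ℝ, E[Δ · w(Δ,A,X) · A · u(X)] = E[Δ · w(Δ,A,X) · (1−A) · u(X)]; equivalently, E[Δ · w(Δ,A,X) · (2A−1) · u(X)] = 0. -/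
open MeasureTheory ProbabilityTheory


lemma integral_comp_eq_sum'
    {Ω 𝒳 : Type*} [MeasurableSpace Ω] [Fintype 𝒳] [MeasurableSpace 𝒳]
    [MeasurableSingletonClass 𝒳]
    (μ : Measure Ω) [IsProbabilityMeasure μ]
    (X : Ω → 𝒳) (A Δ : Ω → ℕ)
    (hX : Measurable X) (hA : Measurable A) (hΔ : Measurable Δ)
    (hA01 : ∀ ω, A ω ≤ 1) (hΔ01 : ∀ ω, Δ ω ≤ 1)
    (F : ℕ → ℕ → 𝒳 → ℝ) :
    Integrable (fun ω => F (Δ ω) (A ω) (X ω)) μ ∧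
    ∫ ω, F (Δ ω) (A ω) (X ω) ∂μ =
      ∑ z : Fin 2 × Fin 2 × 𝒳,
        F (z.1 : ℕ) (z.2.1 : ℕ) z.2.2 *
          (μ {ω | Δ ω = (z.1 : ℕ) ∧ A ω = (z.2.1 : ℕ) ∧ X ω = z.2.2}).toReal := by
  set S : Fin 2 × Fin 2 × 𝒳 → Set Ω :=
    fun z => {ω | Δ ω = (z.1 : ℕ) ∧ A ω = (z.2.1 : ℕ) ∧ X ω = z.2.2} with hS_def
  have hS : ∀ z, MeasurableSet (S z) := fun z =>
    (hΔ (measurableSet_singleton _)).inter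
      ((hA (measurableSet_singleton _)).inter (hX (measurableSet_singleton _)))
  have hrep : ∀ ω, F (Δ ω) (A ω) (X ω) =
      ∑ z : Fin 2 × Fin 2 × 𝒳,
        (S z).indicator (fun _ => F (z.1 : ℕ) (z.2.1 : ℕ) z.2.2) ω := by
    intro ω
    set z0 : Fin 2 × Fin 2 × 𝒳 :=
      (⟨Δ ω, Nat.lt_succ_of_le (hΔ01 ω)⟩, ⟨A ω, Nat.lt_succ_of_le (hA01 ω)⟩, X ω) with hz0
    have hmem : ω ∈ S z0 := ⟨rfl, rfl, rfl⟩
    rw [Finset.sum_eq_single z0]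
    · rw [Set.indicator_of_mem hmem]
    · intro z _ hz
      apply Set.indicator_of_notMem
      intro hωz
      apply hz
      obtain ⟨h1, h2, h3⟩ := hωz
      refine Prod.ext ?_ (Prod.ext ?_ ?_)
      · exact Fin.ext h1.symm
      · exact Fin.ext h2.symm
      · exact h3.symm
    · intro h; exact absurd (Finset.mem_univ z0) h
  have hfun : (fun ω => F (Δ ω) (A ω) (X ω)) =
      fun ω => ∑ z : Fin 2 × Fin 2 × 𝒳,
        (S z).indicator (fun _ => F (z.1 : ℕ) (z.2.1 : ℕ) z.2.2) ω := funext hrep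
  have hint : ∀ z : Fin 2 × Fin 2 × 𝒳,
      Integrable ((S z).indicator (fun _ => F (z.1 : ℕ) (z.2.1 : ℕ) z.2.2)) μ :=
    fun z => (integrable_const _).indicator (hS z)
  constructor
  · rw [hfun]
    exact integrable_finset_sum _ (fun z _ => hint z)
  · rw [hfun, integral_finset_sum _ (fun z _ => hint z)]
    refine Finset.sum_congr rfl fun z _ => ?_
    rw [integral_indicator_const _ (hS z), smul_eq_mul, mul_comm]
    rfl

lemma cond_mul_toReal {Ω : Type*} [MeasurableSpace Ω] (μ : Measure Ω)
    [IsProbabilityMeasure μ] (s t : Set Ω) (hs : MeasurableSet s) :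
    (μ[|s] t).toReal * (μ s).toReal = (μ (s ∩ t)).toReal := by
  rw [cond_apply hs μ t]
  rcases eq_or_ne (μ s) 0 with h0 | h0
  · have hst : μ (s ∩ t) = 0 := measure_mono_null Set.inter_subset_left h0
    simp [h0, hst]
  · rw [ENNReal.toReal_mul, ENNReal.toReal_inv]
    have hne : (μ s).toReal ≠ 0 := ENNReal.toReal_ne_zero.2 ⟨h0, measure_ne_top μ s⟩
    field_simp


/-- If `X` takes values in a finite set, `A, Δ ∈ {0,1}`,
`b(x) = P(A=1|X=x) ∈ (0,1)` and `c(a,x) = P(Δ=1|A=a,X=x) ∈ (0,1)` for every `x` with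
`P(X=x) > 0`, and the weight function `w(δ,a,x)` satisfies the balancing property at every
such `x`, then for every bounded `u : 𝒳 → ℝ`,
`E[Δ·w(Δ,A,X)·A·u(X)] = E[Δ·w(Δ,A,X)·(1-A)·u(X)]`; equivalently
`E[Δ·w(Δ,A,X)·(2A-1)·u(X)] = 0`. -/
theorem balanced_weights_balance_treatment_arms
    {Ω 𝒳 : Type*} [MeasurableSpace Ω] [Fintype 𝒳] [MeasurableSpace 𝒳]
    [MeasurableSingletonClass 𝒳]
    (μ : Measure Ω) [IsProbabilityMeasure μ]
    (X : Ω → 𝒳) (A Δ : Ω → ℕ)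
    (hX : Measurable X) (hA : Measurable A) (hΔ : Measurable Δ)
    (hA01 : ∀ ω, A ω ≤ 1) (hΔ01 : ∀ ω, Δ ω ≤ 1)
    (b : 𝒳 → ℝ) (c : ℕ → 𝒳 → ℝ)
    (hb : ∀ x, b x = (μ[|{ω | X ω = x}] {ω | A ω = 1}).toReal)
    (hc : ∀ a x, c a x = (μ[|{ω | A ω = a ∧ X ω = x}] {ω | Δ ω = 1}).toReal)
    (hbpos : ∀ x, μ {ω | X ω = x} ≠ 0 → b x ∈ Set.Ioo (0 : ℝ) 1)
    (hcpos : ∀ a x, a ≤ 1 → μ {ω | X ω = x} ≠ 0 → c a x ∈ Set.Ioo (0 : ℝ) 1)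
    (w : ℕ → ℕ → 𝒳 → ℝ)
    (hbal : ∀ x, μ {ω | X ω = x} ≠ 0 →
      ((1 - c 0 x) * (1 - b x) * w 0 0 x = c 0 x * (1 - b x) * w 1 0 x ∧
       c 0 x * (1 - b x) * w 1 0 x = (1 - c 1 x) * b x * w 0 1 x ∧
       (1 - c 1 x) * b x * w 0 1 x = c 1 x * b x * w 1 1 x))
    (u : 𝒳 → ℝ) (hu : ∃ C, ∀ x, |u x| ≤ C) :
    (∫ ω, (Δ ω : ℝ) * w (Δ ω) (A ω) (X ω) * (A ω : ℝ) * u (X ω) ∂μ =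
      ∫ ω, (Δ ω : ℝ) * w (Δ ω) (A ω) (X ω) * (1 - (A ω : ℝ)) * u (X ω) ∂μ) ∧
    (∫ ω, (Δ ω : ℝ) * w (Δ ω) (A ω) (X ω) * (2 * (A ω : ℝ) - 1) * u (X ω) ∂μ = 0) := by
  have hXmeas : ∀ x, MeasurableSet {ω | X ω = x} := fun x => hX (measurableSet_singleton x)
  have hAXmeas : ∀ a x, MeasurableSet {ω | A ω = a ∧ X ω = x} := fun a x =>
    (hA (measurableSet_singleton a)).inter (hX (measurableSet_singleton x))
  -- P(A=1, X=x) = b x * P(X=x)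
  have hA1 : ∀ x, (μ {ω | A ω = 1 ∧ X ω = x}).toReal
      = b x * (μ {ω | X ω = x}).toReal := by
    intro x
    have h := cond_mul_toReal μ {ω | X ω = x} {ω | A ω = 1} (hXmeas x)
    have hset : {ω | X ω = x} ∩ {ω | A ω = 1} = {ω | A ω = 1 ∧ X ω = x} :=
      Set.ext fun ω => and_comm
    rw [hset] at h
    rw [← h, hb x]
  have hA0 : ∀ x, (μ {ω | A ω = 0 ∧ X ω = x}).toReal
      = (1 - b x) * (μ {ω | X ω = x}).toReal := by
    intro x
    have hsplit : μ {ω | A ω = 1 ∧ X ω = x} + μ {ω | A ω = 0 ∧ X ω = x}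
        = μ {ω | X ω = x} := by
      rw [← measure_union (by
        rw [Set.disjoint_left]; rintro ω ⟨h1, -⟩ ⟨h0, -⟩; omega) (hAXmeas 0 x)]
      congr 1
      ext ω
      simp only [Set.mem_union, Set.mem_setOf_eq]
      constructor
      · rintro (⟨-, h⟩ | ⟨-, h⟩) <;> exact h
      · intro h
        rcases Nat.le_one_iff_eq_zero_or_eq_one.mp (hA01 ω) with h' | h'
        · exact Or.inr ⟨h', h⟩
        · exact Or.inl ⟨h', h⟩
    have h' : (μ {ω | A ω = 1 ∧ X ω = x}).toReal + (μ {ω | A ω = 0 ∧ X ω = x}).toReal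
        = (μ {ω | X ω = x}).toReal := by
      rw [← ENNReal.toReal_add (measure_ne_top μ _) (measure_ne_top μ _), hsplit]
    have := hA1 x
    linarith
  -- P(Δ=1, A=a, X=x) = c a x * P(A=a, X=x)
  have hD : ∀ a x, (μ {ω | Δ ω = 1 ∧ A ω = a ∧ X ω = x}).toReal
      = c a x * (μ {ω | A ω = a ∧ X ω = x}).toReal := by
    intro a x
    have h := cond_mul_toReal μ {ω | A ω = a ∧ X ω = x} {ω | Δ ω = 1} (hAXmeas a x)
    have hset : {ω | A ω = a ∧ X ω = x} ∩ {ω | Δ ω = 1}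
        = {ω | Δ ω = 1 ∧ A ω = a ∧ X ω = x} := by
      ext ω; simp only [Set.mem_inter_iff, Set.mem_setOf_eq]; tauto
    rw [hset] at h
    rw [← h, hc a x]
  obtain ⟨hi1, he1⟩ := integral_comp_eq_sum' μ X A Δ hX hA hΔ hA01 hΔ01
    (fun d a x => (d : ℝ) * w d a x * (a : ℝ) * u x)
  obtain ⟨hi2, he2⟩ := integral_comp_eq_sum' μ X A Δ hX hA hΔ hA01 hΔ01
    (fun d a x => (d : ℝ) * w d a x * (1 - (a : ℝ)) * u x)
  have hsum : (∑ z : Fin 2 × Fin 2 × 𝒳,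
        ((z.1 : ℕ) : ℝ) * w (z.1 : ℕ) (z.2.1 : ℕ) z.2.2 * ((z.2.1 : ℕ) : ℝ) * u z.2.2 *
          (μ {ω | Δ ω = (z.1 : ℕ) ∧ A ω = (z.2.1 : ℕ) ∧ X ω = z.2.2}).toReal)
      = ∑ z : Fin 2 × Fin 2 × 𝒳,
        ((z.1 : ℕ) : ℝ) * w (z.1 : ℕ) (z.2.1 : ℕ) z.2.2 * (1 - ((z.2.1 : ℕ) : ℝ)) * u z.2.2 *
          (μ {ω | Δ ω = (z.1 : ℕ) ∧ A ω = (z.2.1 : ℕ) ∧ X ω = z.2.2}).toReal := by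
    rw [Fintype.sum_prod_type, Fintype.sum_prod_type]
    simp only [Fin.sum_univ_two, Fintype.sum_prod_type, Fin.val_zero, Fin.val_one,
      Nat.cast_zero, Nat.cast_one, zero_mul, mul_zero, one_mul, mul_one, sub_zero,
      sub_self, zero_add, add_zero, Finset.sum_const_zero]
    refine Finset.sum_congr rfl fun x _ => ?_
    by_cases hx : μ {ω | X ω = x} = 0
    · have h1 : μ {ω | Δ ω = 1 ∧ A ω = 1 ∧ X ω = x} = 0 :=
        measure_mono_null (fun ω h => h.2.2) hx
      have h0 : μ {ω | Δ ω = 1 ∧ A ω = 0 ∧ X ω = x} = 0 :=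
        measure_mono_null (fun ω h => h.2.2) hx
      simp [h1, h0]
    · have e11 : (μ {ω | Δ ω = 1 ∧ A ω = 1 ∧ X ω = x}).toReal
          = c 1 x * (b x * (μ {ω | X ω = x}).toReal) := by rw [hD 1 x, hA1 x]
      have e10 : (μ {ω | Δ ω = 1 ∧ A ω = 0 ∧ X ω = x}).toReal
          = c 0 x * ((1 - b x) * (μ {ω | X ω = x}).toReal) := by rw [hD 0 x, hA0 x]
      have hb2 := (hbal x hx).2.1.trans (hbal x hx).2.2
      rw [e11, e10]
      linear_combination (-1 * u x * (μ {ω | X ω = x}).toReal) * hb2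
  have part1 : (∫ ω, (Δ ω : ℝ) * w (Δ ω) (A ω) (X ω) * (A ω : ℝ) * u (X ω) ∂μ)
      = ∫ ω, (Δ ω : ℝ) * w (Δ ω) (A ω) (X ω) * (1 - (A ω : ℝ)) * u (X ω) ∂μ := by
    calc (∫ ω, (Δ ω : ℝ) * w (Δ ω) (A ω) (X ω) * (A ω : ℝ) * u (X ω) ∂μ)
        = _ := he1
      _ = _ := hsum
      _ = ∫ ω, (Δ ω : ℝ) * w (Δ ω) (A ω) (X ω) * (1 - (A ω : ℝ)) * u (X ω) ∂μ := he2.symm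
  refine ⟨part1, ?_⟩
  have e3 : (∫ ω, (Δ ω : ℝ) * w (Δ ω) (A ω) (X ω) * (2 * (A ω : ℝ) - 1) * u (X ω) ∂μ)
      = ∫ ω, ((Δ ω : ℝ) * w (Δ ω) (A ω) (X ω) * (A ω : ℝ) * u (X ω)
          - (Δ ω : ℝ) * w (Δ ω) (A ω) (X ω) * (1 - (A ω : ℝ)) * u (X ω)) ∂μ :=
    integral_congr_ae (Filter.Eventually.of_forall fun ω => by ring)
  calc (∫ ω, (Δ ω : ℝ) * w (Δ ω) (A ω) (X ω) * (2 * (A ω : ℝ) - 1) * u (X ω) ∂μ)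
      = _ := e3
    _ = (∫ ω, (Δ ω : ℝ) * w (Δ ω) (A ω) (X ω) * (A ω : ℝ) * u (X ω) ∂μ)
        - ∫ ω, (Δ ω : ℝ) * w (Δ ω) (A ω) (X ω) * (1 - (A ω : ℝ)) * u (X ω) ∂μ :=
      integral_sub hi1 hi2
    _ = 0 := by rw [part1]; ring
end

section
/- Assume the competing-risks potential-outcome setup with consistency, NUC/CAR mean-independence, failure-type exogeneity, and positivity c(a,x) = P(Δ=1|A=a,X=x) > 0 whenever P(X=x,A=a) > 0. Then for every rule d : 𝒳 → {0,1}, E[(Δ / c(A,X)) · (Y + (d(X) − A)·γ_K(X))] = E[Σ_{k=1}^{κ} 1(K=k) · Y(d(X),k)]. In particular, the value estimating equation E[(Δ / c(A,X)) · (Y + (d(X) − A)·γ_K(X) − μ)] = 0 has the unique solution μ = E[Σ_{k=1}^{κ} 1(K=k) · Y(d(X),k)], the value of the regime d. -/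
open MeasureTheory ProbabilityTheory

section AuxVEE

variable {Ω : Type*} [MeasurableSpace Ω]

lemma auxVEE_integral_cond (μ : Measure Ω) [IsFiniteMeasure μ] (E : Set Ω) (g : Ω → ℝ) :
    ∫ ω in E, g ω ∂μ = (μ E).toReal * ∫ ω, g ω ∂(μ[|E]) := by
  rcases eq_or_ne (μ E) 0 with h | h
  · rw [Measure.restrict_eq_zero.mpr h]
    simp [h]
  · rw [ProbabilityTheory.cond, integral_smul_measure, ENNReal.toReal_inv, smul_eq_mul,
      ← mul_assoc, mul_inv_cancel₀ (ENNReal.toReal_ne_zero.mpr ⟨h, measure_ne_top μ E⟩), one_mul]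

lemma auxVEE_meas_cond (μ : Measure Ω) [IsFiniteMeasure μ] {E : Set Ω} (hE : MeasurableSet E)
    (F : Set Ω) : (μ (E ∩ F)).toReal = (μ E).toReal * (μ[|E] F).toReal := by
  rw [ProbabilityTheory.cond_apply hE]
  rcases eq_or_ne (μ E) 0 with h | h
  · have h2 : μ (E ∩ F) = 0 := measure_inter_null_of_null_left F h
    simp [h, h2]
  · rw [ENNReal.toReal_mul, ENNReal.toReal_inv, ← mul_assoc,
      mul_inv_cancel₀ (ENNReal.toReal_ne_zero.mpr ⟨h, measure_ne_top μ E⟩), one_mul]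

lemma auxVEE_integrable_cond (μ : Measure Ω) (E : Set Ω) {g : Ω → ℝ}
    (hg : Integrable g μ) (hE : μ E ≠ 0) : Integrable g (μ[|E]) := by
  rw [ProbabilityTheory.cond]
  exact (hg.restrict).smul_measure (ENNReal.inv_ne_top.mpr hE)

lemma auxVEE_meas_split (μ : Measure Ω) [IsFiniteMeasure μ] (T U V : Set Ω)
    (hU : MeasurableSet U) (hdisj : Disjoint U V) (hcover : T = U ∪ V) :
    (μ T).toReal = (μ U).toReal + (μ V).toReal := by
  rw [hcover, measure_union' hdisj hU, ENNReal.toReal_add (measure_ne_top μ U) (measure_ne_top μ V)]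

lemma auxVEE_blip (m : ℕ → ℝ) (a dx : ℕ) (ha : a ≤ 1) (hdx : dx ≤ 1) :
    m a + ((dx : ℝ) - (a : ℝ)) * (m 1 - m 0) = m dx := by
  interval_cases a <;> interval_cases dx <;> push_cast <;> ring

lemma auxVEE_sum2 {F : ℕ → ℕ → ℝ} {sa sk : Finset ℕ} {a₀ k₀ : ℕ}
    (ha : a₀ ∈ sa) (hk : k₀ ∈ sk)
    (hF : ∀ a k, ¬(a = a₀ ∧ k = k₀) → F a k = 0) :
    ∑ a ∈ sa, ∑ k ∈ sk, F a k = F a₀ k₀ := by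
  rw [Finset.sum_eq_single_of_mem a₀ ha
      (fun b _ hb => Finset.sum_eq_zero fun k _ => hF b k (by simp [hb])),
    Finset.sum_eq_single_of_mem k₀ hk (fun b _ hb => hF a₀ b (by simp [hb]))]

lemma auxVEE_sum3 {𝒳 : Type*} {F : 𝒳 → ℕ → ℕ → ℝ} {sx : Finset 𝒳} {sa sd : Finset ℕ}
    {x₀ : 𝒳} {a₀ δ₀ : ℕ}
    (hx : x₀ ∈ sx) (ha : a₀ ∈ sa) (hδ : δ₀ ∈ sd)
    (hF : ∀ x a δ, ¬(x = x₀ ∧ a = a₀ ∧ δ = δ₀) → F x a δ = 0) :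
    ∑ x ∈ sx, ∑ a ∈ sa, ∑ δ ∈ sd, F x a δ = F x₀ a₀ δ₀ := by
  rw [Finset.sum_eq_single_of_mem x₀ hx (fun b _ hb => Finset.sum_eq_zero fun a _ =>
      Finset.sum_eq_zero fun δ _ => hF b a δ (by simp [hb])),
    Finset.sum_eq_single_of_mem a₀ ha (fun b _ hb =>
      Finset.sum_eq_zero fun δ _ => hF x₀ b δ (by simp [hb])),
    Finset.sum_eq_single_of_mem δ₀ hδ (fun b _ hb => hF x₀ a₀ b (by simp [hb]))]

lemma auxVEE_sum4 {𝒳 : Type*} {F : 𝒳 → ℕ → ℕ → ℕ → ℝ} {sx : Finset 𝒳} {sa sk sd : Finset ℕ}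
    {x₀ : 𝒳} {a₀ k₀ δ₀ : ℕ}
    (hx : x₀ ∈ sx) (ha : a₀ ∈ sa) (hk : k₀ ∈ sk) (hδ : δ₀ ∈ sd)
    (hF : ∀ x a k δ, ¬(x = x₀ ∧ a = a₀ ∧ k = k₀ ∧ δ = δ₀) → F x a k δ = 0) :
    ∑ x ∈ sx, ∑ a ∈ sa, ∑ k ∈ sk, ∑ δ ∈ sd, F x a k δ = F x₀ a₀ k₀ δ₀ := by
  rw [Finset.sum_eq_single_of_mem x₀ hx (fun b _ hb => Finset.sum_eq_zero fun a _ =>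
      Finset.sum_eq_zero fun k _ => Finset.sum_eq_zero fun δ _ => hF b a k δ (by simp [hb])),
    Finset.sum_eq_single_of_mem a₀ ha (fun b _ hb => Finset.sum_eq_zero fun k _ =>
      Finset.sum_eq_zero fun δ _ => hF x₀ b k δ (by simp [hb])),
    Finset.sum_eq_single_of_mem k₀ hk (fun b _ hb =>
      Finset.sum_eq_zero fun δ _ => hF x₀ a₀ b δ (by simp [hb])),
    Finset.sum_eq_single_of_mem δ₀ hδ (fun b _ hb => hF x₀ a₀ k₀ b (by simp [hb]))]

end AuxVEE

/-- In the competing-risks potential-outcome setup with consistency,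
NUC/CAR mean-independence, failure-type exogeneity and positivity of
`c(a,x) = P(Δ=1|A=a,X=x)`, for every rule `d : 𝒳 → {0,1}`,
`E[(Δ/c(A,X))·(Y + (d(X) − A)·γ_K(X))] = E[Σₖ 1(K=k)·Y(d(X),k)]`; in particular the value
estimating equation `E[(Δ/c(A,X))·(Y + (d(X) − A)·γ_K(X) − μ₀)] = 0` has the unique
solution `μ₀ = E[Σₖ 1(K=k)·Y(d(X),k)]`, the value of the regime `d`. -/
theorem value_estimating_equation_unbiased
    {Ω 𝒳 : Type*} [MeasurableSpace Ω] [Fintype 𝒳] [MeasurableSpace 𝒳]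
    [MeasurableSingletonClass 𝒳]
    (μ : Measure Ω) [IsProbabilityMeasure μ]
    (κ : ℕ) (X : Ω → 𝒳) (A Δ K : Ω → ℕ) (Y : Ω → ℝ) (Ycf : ℕ → ℕ → Ω → ℝ)
    (hX : Measurable X) (hA : Measurable A) (hΔ : Measurable Δ) (hK : Measurable K)
    (hY : Measurable Y) (hYcf : ∀ a k, Measurable (Ycf a k))
    (hYint : ∀ a k, Integrable (Ycf a k) μ)
    (hA01 : ∀ ω, A ω ≤ 1) (hΔ01 : ∀ ω, Δ ω ≤ 1) (hKκ : ∀ ω, K ω ∈ Finset.Icc 1 κ)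
    -- consistency: Y = Σₐ Σₖ 1(A=a)·1(K=k)·Y(a,k)
    (hcons : ∀ ω, Y ω = ∑ a ∈ Finset.range 2, ∑ k ∈ Finset.Icc 1 κ,
        (if A ω = a then (1 : ℝ) else 0) * (if K ω = k then (1 : ℝ) else 0) * Ycf a k ω)
    -- blip: γ_k(x) = E[Y(1,k) − Y(0,k) | X = x]
    (γ : ℕ → 𝒳 → ℝ)
    (hγ : ∀ k x, γ k x = ∫ ω, (Ycf 1 k ω - Ycf 0 k ω) ∂(μ[|{ω | X ω = x}]))
    -- NUC/CAR mean-independence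
    (hnuc : ∀ a k, a ≤ 1 → k ∈ Finset.Icc 1 κ → ∀ x a' k' δ,
      μ {ω | X ω = x ∧ A ω = a' ∧ K ω = k' ∧ Δ ω = δ} ≠ 0 →
      (∫ ω, Ycf a k ω ∂(μ[|{ω | X ω = x ∧ A ω = a' ∧ K ω = k' ∧ Δ ω = δ}])) =
        ∫ ω, Ycf a k ω ∂(μ[|{ω | X ω = x}]))
    -- failure-type exogeneity
    (hexo : ∀ x a δ k, μ {ω | X ω = x ∧ A ω = a ∧ Δ ω = δ} ≠ 0 →
      (μ[|{ω | X ω = x ∧ A ω = a ∧ Δ ω = δ}] {ω | K ω = k}).toReal =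
        (μ[|{ω | X ω = x}] {ω | K ω = k}).toReal)
    -- censoring model and positivity
    (c : ℕ → 𝒳 → ℝ)
    (hc : ∀ a x, c a x = (μ[|{ω | A ω = a ∧ X ω = x}] {ω | Δ ω = 1}).toReal)
    (hpos : ∀ a x, μ {ω | X ω = x ∧ A ω = a} ≠ 0 → 0 < c a x)
    (d : 𝒳 → ℕ) (hd : ∀ x, d x ≤ 1) :
    (∫ ω, (Δ ω : ℝ) / c (A ω) (X ω) *
        (Y ω + ((d (X ω) : ℝ) - (A ω : ℝ)) * γ (K ω) (X ω)) ∂μ =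
      ∫ ω, ∑ k ∈ Finset.Icc 1 κ,
        (if K ω = k then (1 : ℝ) else 0) * Ycf (d (X ω)) k ω ∂μ) ∧
    (∀ μ₀ : ℝ,
      (∫ ω, (Δ ω : ℝ) / c (A ω) (X ω) *
          (Y ω + ((d (X ω) : ℝ) - (A ω : ℝ)) * γ (K ω) (X ω) - μ₀) ∂μ = 0) ↔
        μ₀ = ∫ ω, ∑ k ∈ Finset.Icc 1 κ,
          (if K ω = k then (1 : ℝ) else 0) * Ycf (d (X ω)) k ω ∂μ) := by
  classical
  have hmX : ∀ x : 𝒳, MeasurableSet {ω | X ω = x} := fun x => hX (measurableSet_singleton x)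
  have hmS : ∀ (x : 𝒳) (a k δ : ℕ),
      MeasurableSet {ω | X ω = x ∧ A ω = a ∧ K ω = k ∧ Δ ω = δ} := fun x a k δ =>
    (hmX x).inter ((hA (measurableSet_singleton a)).inter
      ((hK (measurableSet_singleton k)).inter (hΔ (measurableSet_singleton δ))))
  have hmG : ∀ (x : 𝒳) (a : ℕ), MeasurableSet {ω | X ω = x ∧ A ω = a} := fun x a =>
    (hmX x).inter (hA (measurableSet_singleton a))
  have hmF : ∀ (x : 𝒳) (a δ : ℕ), MeasurableSet {ω | X ω = x ∧ A ω = a ∧ Δ ω = δ} :=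
    fun x a δ => (hmX x).inter ((hA (measurableSet_singleton a)).inter
      (hΔ (measurableSet_singleton δ)))
  have hmH : ∀ (x : 𝒳) (a k : ℕ), MeasurableSet {ω | X ω = x ∧ A ω = a ∧ K ω = k} :=
    fun x a k => (hmX x).inter ((hA (measurableSet_singleton a)).inter
      (hK (measurableSet_singleton k)))
  have hAm : ∀ ω, A ω ∈ Finset.range 2 := fun ω => Finset.mem_range.mpr (Nat.lt_succ_of_le (hA01 ω))
  have hΔm : ∀ ω, Δ ω ∈ Finset.range 2 := fun ω => Finset.mem_range.mpr (Nat.lt_succ_of_le (hΔ01 ω))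
  -- consistency collapse
  have hYcoll : ∀ ω, Y ω = Ycf (A ω) (K ω) ω := by
    intro ω
    rw [hcons ω, auxVEE_sum2 (hAm ω) (hKκ ω) (fun a k h => by
      rcases not_and_or.mp h with h' | h'
      · simp [show A ω ≠ a from fun h'' => h' h''.symm]
      · simp [show K ω ≠ k from fun h'' => h' h''.symm])]
    simp
  -- pointwise decomposition of the LHS integrand
  have hfpt : ∀ ω, (Δ ω : ℝ) / c (A ω) (X ω) *
      (Y ω + ((d (X ω) : ℝ) - (A ω : ℝ)) * γ (K ω) (X ω)) =
      ∑ x ∈ Finset.univ, ∑ a ∈ Finset.range 2, ∑ k ∈ Finset.Icc 1 κ, ∑ δ ∈ Finset.range 2,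
        Set.indicator {ω' | X ω' = x ∧ A ω' = a ∧ K ω' = k ∧ Δ ω' = δ}
          (fun ω' => (δ : ℝ) / c a x * (Ycf a k ω' + ((d x : ℝ) - (a : ℝ)) * γ k x)) ω := by
    intro ω
    have hzero : ∀ (x : 𝒳) (a k δ : ℕ), ¬(x = X ω ∧ a = A ω ∧ k = K ω ∧ δ = Δ ω) →
        Set.indicator {ω' | X ω' = x ∧ A ω' = a ∧ K ω' = k ∧ Δ ω' = δ}
          (fun ω' => (δ : ℝ) / c a x * (Ycf a k ω' + ((d x : ℝ) - (a : ℝ)) * γ k x)) ω = 0 := by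
      intro x a k δ h
      refine Set.indicator_of_notMem (fun hmem => ?_) _
      have hmem' : X ω = x ∧ A ω = a ∧ K ω = k ∧ Δ ω = δ := hmem
      exact h ⟨hmem'.1.symm, hmem'.2.1.symm, hmem'.2.2.1.symm, hmem'.2.2.2.symm⟩
    rw [auxVEE_sum4 (Finset.mem_univ (X ω)) (hAm ω) (hKκ ω) (hΔm ω) hzero,
      Set.indicator_of_mem (show ω ∈ {ω' | X ω' = X ω ∧ A ω' = A ω ∧ K ω' = K ω ∧ Δ ω' = Δ ω}
        from ⟨rfl, rfl, rfl, rfl⟩), hYcoll ω]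
  -- pointwise decomposition of the RHS integrand
  have hgpt : ∀ ω, (∑ k ∈ Finset.Icc 1 κ,
      (if K ω = k then (1 : ℝ) else 0) * Ycf (d (X ω)) k ω) =
      ∑ x ∈ Finset.univ, ∑ a ∈ Finset.range 2, ∑ k ∈ Finset.Icc 1 κ, ∑ δ ∈ Finset.range 2,
        Set.indicator {ω' | X ω' = x ∧ A ω' = a ∧ K ω' = k ∧ Δ ω' = δ}
          (fun ω' => Ycf (d x) k ω') ω := by
    intro ω
    have hzero : ∀ (x : 𝒳) (a k δ : ℕ), ¬(x = X ω ∧ a = A ω ∧ k = K ω ∧ δ = Δ ω) →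
        Set.indicator {ω' | X ω' = x ∧ A ω' = a ∧ K ω' = k ∧ Δ ω' = δ}
          (fun ω' => Ycf (d x) k ω') ω = 0 := by
      intro x a k δ h
      refine Set.indicator_of_notMem (fun hmem => ?_) _
      have hmem' : X ω = x ∧ A ω = a ∧ K ω = k ∧ Δ ω = δ := hmem
      exact h ⟨hmem'.1.symm, hmem'.2.1.symm, hmem'.2.2.1.symm, hmem'.2.2.2.symm⟩
    rw [auxVEE_sum4 (Finset.mem_univ (X ω)) (hAm ω) (hKκ ω) (hΔm ω) hzero,
      Set.indicator_of_mem (show ω ∈ {ω' | X ω' = X ω ∧ A ω' = A ω ∧ K ω' = K ω ∧ Δ ω' = Δ ω}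
        from ⟨rfl, rfl, rfl, rfl⟩),
      Finset.sum_eq_single_of_mem (K ω) (hKκ ω) (fun b _ hb => by simp [Ne.symm hb])]
    simp
  -- pointwise decomposition of Δ/c(A,X)
  have hdcpt : ∀ ω, (Δ ω : ℝ) / c (A ω) (X ω) =
      ∑ x ∈ Finset.univ, ∑ a ∈ Finset.range 2, ∑ δ ∈ Finset.range 2,
        Set.indicator {ω' | X ω' = x ∧ A ω' = a ∧ Δ ω' = δ}
          (fun _ => (δ : ℝ) / c a x) ω := by
    intro ω
    have hzero : ∀ (x : 𝒳) (a δ : ℕ), ¬(x = X ω ∧ a = A ω ∧ δ = Δ ω) →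
        Set.indicator {ω' | X ω' = x ∧ A ω' = a ∧ Δ ω' = δ} (fun _ => (δ : ℝ) / c a x) ω = 0 := by
      intro x a δ h
      refine Set.indicator_of_notMem (fun hmem => ?_) _
      have hmem' : X ω = x ∧ A ω = a ∧ Δ ω = δ := hmem
      exact h ⟨hmem'.1.symm, hmem'.2.1.symm, hmem'.2.2.symm⟩
    rw [auxVEE_sum3 (Finset.mem_univ (X ω)) (hAm ω) (hΔm ω) hzero,
      Set.indicator_of_mem (show ω ∈ {ω' | X ω' = X ω ∧ A ω' = A ω ∧ Δ ω' = Δ ω}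
        from ⟨rfl, rfl, rfl⟩)]
  -- integrability of pieces
  have hpieceIntL : ∀ (x : 𝒳) (a k δ : ℕ),
      Integrable (Set.indicator {ω' | X ω' = x ∧ A ω' = a ∧ K ω' = k ∧ Δ ω' = δ}
        (fun ω' => (δ : ℝ) / c a x * (Ycf a k ω' + ((d x : ℝ) - (a : ℝ)) * γ k x))) μ :=
    fun x a k δ => (((hYint a k).add (integrable_const _)).const_mul _).indicator (hmS x a k δ)
  have hpieceIntR : ∀ (x : 𝒳) (a k δ : ℕ),
      Integrable (Set.indicator {ω' | X ω' = x ∧ A ω' = a ∧ K ω' = k ∧ Δ ω' = δ}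
        (fun ω' => Ycf (d x) k ω')) μ :=
    fun x a k δ => (hYint (d x) k).indicator (hmS x a k δ)
  have hpieceIntC : ∀ (x : 𝒳) (a δ : ℕ),
      Integrable (Set.indicator {ω' | X ω' = x ∧ A ω' = a ∧ Δ ω' = δ}
        (fun _ => (δ : ℝ) / c a x)) μ :=
    fun x a δ => (integrable_const _).indicator (hmF x a δ)
  -- integrability of the LHS integrand and of Δ/c
  have hfint : Integrable (fun ω => (Δ ω : ℝ) / c (A ω) (X ω) *
      (Y ω + ((d (X ω) : ℝ) - (A ω : ℝ)) * γ (K ω) (X ω))) μ := by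
    rw [funext hfpt]
    exact integrable_finset_sum _ fun x _ => integrable_finset_sum _ fun a _ =>
      integrable_finset_sum _ fun k _ => integrable_finset_sum _ fun δ _ => hpieceIntL x a k δ
  have hdcint : Integrable (fun ω => (Δ ω : ℝ) / c (A ω) (X ω)) μ := by
    rw [funext hdcpt]
    exact integrable_finset_sum _ fun x _ => integrable_finset_sum _ fun a _ =>
      integrable_finset_sum _ fun δ _ => hpieceIntC x a δ
  -- per-atom evaluation (LHS)
  have hatomL : ∀ (x : 𝒳) (a k δ : ℕ), a ∈ Finset.range 2 → k ∈ Finset.Icc 1 κ →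
      ∫ ω, Set.indicator {ω' | X ω' = x ∧ A ω' = a ∧ K ω' = k ∧ Δ ω' = δ}
        (fun ω' => (δ : ℝ) / c a x * (Ycf a k ω' + ((d x : ℝ) - (a : ℝ)) * γ k x)) ω ∂μ =
      (μ {ω' | X ω' = x ∧ A ω' = a ∧ K ω' = k ∧ Δ ω' = δ}).toReal * ((δ : ℝ) / c a x) *
        ∫ ω, Ycf (d x) k ω ∂(μ[|{ω | X ω = x}]) := by
    intro x a k δ hamem hkmem
    rw [integral_indicator (hmS x a k δ), auxVEE_integral_cond]
    rcases eq_or_ne (μ {ω' | X ω' = x ∧ A ω' = a ∧ K ω' = k ∧ Δ ω' = δ}) 0 with h | h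
    · simp [h]
    · have hx0 : μ {ω | X ω = x} ≠ 0 := fun h0 =>
        h (measure_mono_null (fun ω hω => hω.1) h0)
      haveI := ProbabilityTheory.cond_isProbabilityMeasure (μ := μ) h
      rw [integral_const_mul,
        integral_add (auxVEE_integrable_cond μ _ (hYint a k) h) (integrable_const _),
        integral_const, measureReal_def, measure_univ, ENNReal.toReal_one, one_smul,
        hnuc a k (Nat.lt_succ_iff.mp (Finset.mem_range.mp hamem)) hkmem x a k δ h]
      have hγ2 : γ k x = (∫ ω, Ycf 1 k ω ∂(μ[|{ω | X ω = x}])) -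
          ∫ ω, Ycf 0 k ω ∂(μ[|{ω | X ω = x}]) := by
        rw [hγ k x, integral_sub (auxVEE_integrable_cond μ _ (hYint 1 k) hx0)
          (auxVEE_integrable_cond μ _ (hYint 0 k) hx0)]
      rw [hγ2]
      have hb := auxVEE_blip (fun a' => ∫ ω, Ycf a' k ω ∂(μ[|{ω | X ω = x}])) a (d x)
        (Nat.lt_succ_iff.mp (Finset.mem_range.mp hamem)) (hd x)
      rw [hb]
      ring
  -- per-atom evaluation (RHS)
  have hatomR : ∀ (x : 𝒳) (a k δ : ℕ), k ∈ Finset.Icc 1 κ →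
      ∫ ω, Set.indicator {ω' | X ω' = x ∧ A ω' = a ∧ K ω' = k ∧ Δ ω' = δ}
        (fun ω' => Ycf (d x) k ω') ω ∂μ =
      (μ {ω' | X ω' = x ∧ A ω' = a ∧ K ω' = k ∧ Δ ω' = δ}).toReal *
        ∫ ω, Ycf (d x) k ω ∂(μ[|{ω | X ω = x}]) := by
    intro x a k δ hkmem
    rw [integral_indicator (hmS x a k δ), auxVEE_integral_cond]
    rcases eq_or_ne (μ {ω' | X ω' = x ∧ A ω' = a ∧ K ω' = k ∧ Δ ω' = δ}) 0 with h | h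
    · simp [h]
    · rw [hnuc (d x) k (hd x) hkmem x a k δ h]
  -- censoring mass identity
  have hcmass : ∀ (x : 𝒳) (a : ℕ),
      (μ {ω | X ω = x ∧ A ω = a ∧ Δ ω = 1}).toReal * ((1 : ℝ) / c a x) =
      (μ {ω | X ω = x ∧ A ω = a}).toReal := by
    intro x a
    rcases eq_or_ne (μ {ω | X ω = x ∧ A ω = a}) 0 with hG | hG
    · have hsub : {ω | X ω = x ∧ A ω = a ∧ Δ ω = 1} ⊆ {ω | X ω = x ∧ A ω = a} :=
        fun ω hω => ⟨hω.1, hω.2.1⟩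
      have hF0 : μ {ω | X ω = x ∧ A ω = a ∧ Δ ω = 1} = 0 := measure_mono_null hsub hG
      simp [hF0, hG]
    · have hcpos := hpos a x hG
      have hsetG : {ω | A ω = a ∧ X ω = x} = {ω | X ω = x ∧ A ω = a} := by
        ext ω; simp only [Set.mem_setOf_eq]; tauto
      have hsetF : {ω | X ω = x ∧ A ω = a ∧ Δ ω = 1} =
          {ω | X ω = x ∧ A ω = a} ∩ {ω | Δ ω = 1} := by
        ext ω; simp only [Set.mem_setOf_eq, Set.mem_inter_iff]; tauto
      have h2 : (μ {ω | X ω = x ∧ A ω = a ∧ Δ ω = 1}).toReal =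
          (μ {ω | X ω = x ∧ A ω = a}).toReal * c a x := by
        rw [hc a x, hsetG, hsetF, auxVEE_meas_cond μ (hmG x a)]
      rw [h2]
      field_simp
  -- key mass identity
  have hkey : ∀ (x : 𝒳) (a k : ℕ),
      (μ {ω' | X ω' = x ∧ A ω' = a ∧ K ω' = k ∧ Δ ω' = 1}).toReal * ((1 : ℝ) / c a x) =
      (μ {ω | X ω = x ∧ A ω = a}).toReal * (μ[|{ω | X ω = x}] {ω | K ω = k}).toReal := by
    intro x a k
    rcases eq_or_ne (μ {ω | X ω = x ∧ A ω = a}) 0 with hG | hG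
    · have hsub : {ω' | X ω' = x ∧ A ω' = a ∧ K ω' = k ∧ Δ ω' = 1} ⊆ {ω | X ω = x ∧ A ω = a} :=
        fun ω hω => ⟨hω.1, hω.2.1⟩
      have hS0 : μ {ω' | X ω' = x ∧ A ω' = a ∧ K ω' = k ∧ Δ ω' = 1} = 0 := measure_mono_null hsub hG
      simp [hS0, hG]
    · have hcpos := hpos a x hG
      have hF1 : μ {ω | X ω = x ∧ A ω = a ∧ Δ ω = 1} ≠ 0 := by
        intro h0
        have := hcmass x a
        rw [h0] at this
        simp only [ENNReal.toReal_zero, zero_mul] at this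
        have hGpos : 0 < (μ {ω | X ω = x ∧ A ω = a}).toReal :=
          ENNReal.toReal_pos hG (measure_ne_top _ _)
        linarith [this]
      have hsetS : {ω' | X ω' = x ∧ A ω' = a ∧ K ω' = k ∧ Δ ω' = 1} =
          {ω | X ω = x ∧ A ω = a ∧ Δ ω = 1} ∩ {ω | K ω = k} := by
        ext ω; simp only [Set.mem_setOf_eq, Set.mem_inter_iff]; tauto
      have h1 : (μ {ω' | X ω' = x ∧ A ω' = a ∧ K ω' = k ∧ Δ ω' = 1}).toReal =
          (μ {ω | X ω = x ∧ A ω = a ∧ Δ ω = 1}).toReal *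
            (μ[|{ω | X ω = x}] {ω | K ω = k}).toReal := by
        rw [hsetS, auxVEE_meas_cond μ (hmF x a 1), hexo x a 1 k hF1]
      rw [h1, ← hcmass x a]
      ring
  -- splitting sums
  have hGsum : ∀ x : 𝒳, (μ {ω | X ω = x ∧ A ω = 0}).toReal +
      (μ {ω | X ω = x ∧ A ω = 1}).toReal = (μ {ω | X ω = x}).toReal := by
    intro x
    refine (auxVEE_meas_split μ _ _ _ (hmG x 0) ?_ ?_).symm
    · exact Set.disjoint_left.mpr fun ω h0 h1 => by
        have := h0.2; have := h1.2; omega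
    · ext ω
      simp only [Set.mem_setOf_eq, Set.mem_union]
      constructor
      · intro h
        rcases Nat.le_one_iff_eq_zero_or_eq_one.mp (hA01 ω) with h' | h' <;> tauto
      · rintro (h | h) <;> exact h.1
  have hHsum : ∀ (x : 𝒳) (k : ℕ), (μ {ω' | X ω' = x ∧ A ω' = 0 ∧ K ω' = k}).toReal +
      (μ {ω' | X ω' = x ∧ A ω' = 1 ∧ K ω' = k}).toReal =
      (μ {ω | X ω = x ∧ K ω = k}).toReal := by
    intro x k
    refine (auxVEE_meas_split μ _ _ _ (hmH x 0 k) ?_ ?_).symm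
    · exact Set.disjoint_left.mpr fun ω h0 h1 => by
        have := h0.2.1; have := h1.2.1; omega
    · ext ω
      simp only [Set.mem_setOf_eq, Set.mem_union]
      constructor
      · intro h
        rcases Nat.le_one_iff_eq_zero_or_eq_one.mp (hA01 ω) with h' | h' <;> tauto
      · rintro (h | h) <;> exact ⟨h.1, h.2.2⟩
  have hDsum : ∀ (x : 𝒳) (a k : ℕ),
      (μ {ω' | X ω' = x ∧ A ω' = a ∧ K ω' = k ∧ Δ ω' = 0}).toReal +
      (μ {ω' | X ω' = x ∧ A ω' = a ∧ K ω' = k ∧ Δ ω' = 1}).toReal =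
      (μ {ω | X ω = x ∧ A ω = a ∧ K ω = k}).toReal := by
    intro x a k
    refine (auxVEE_meas_split μ _ _ _ (hmS x a k 0) ?_ ?_).symm
    · exact Set.disjoint_left.mpr fun ω h0 h1 => by
        have := h0.2.2.2; have := h1.2.2.2; omega
    · ext ω
      simp only [Set.mem_setOf_eq, Set.mem_union]
      constructor
      · intro h
        rcases Nat.le_one_iff_eq_zero_or_eq_one.mp (hΔ01 ω) with h' | h' <;> tauto
      · rintro (h | h) <;> exact ⟨h.1, h.2.1, h.2.2.1⟩
  -- LHS computation
  have hLHS : (∫ ω, (Δ ω : ℝ) / c (A ω) (X ω) *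
      (Y ω + ((d (X ω) : ℝ) - (A ω : ℝ)) * γ (K ω) (X ω)) ∂μ) =
      ∑ x ∈ Finset.univ, ∑ k ∈ Finset.Icc 1 κ,
        (μ {ω | X ω = x ∧ K ω = k}).toReal * ∫ ω, Ycf (d x) k ω ∂(μ[|{ω | X ω = x}]) := by
    simp only [hfpt]
    rw [integral_finset_sum _ (fun x _ => integrable_finset_sum _ fun a _ =>
      integrable_finset_sum _ fun k _ => integrable_finset_sum _ fun δ _ => hpieceIntL x a k δ)]
    refine Finset.sum_congr rfl fun x _ => ?_
    rw [integral_finset_sum _ (fun a _ => integrable_finset_sum _ fun k _ =>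
      integrable_finset_sum _ fun δ _ => hpieceIntL x a k δ)]
    have step_a : ∀ a ∈ Finset.range 2,
        (∫ ω, ∑ k ∈ Finset.Icc 1 κ, ∑ δ ∈ Finset.range 2,
          Set.indicator {ω' | X ω' = x ∧ A ω' = a ∧ K ω' = k ∧ Δ ω' = δ}
            (fun ω' => (δ : ℝ) / c a x * (Ycf a k ω' + ((d x : ℝ) - (a : ℝ)) * γ k x)) ω ∂μ) =
        ∑ k ∈ Finset.Icc 1 κ, (μ {ω | X ω = x ∧ A ω = a}).toReal *
          ((μ[|{ω | X ω = x}] {ω | K ω = k}).toReal *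
            ∫ ω, Ycf (d x) k ω ∂(μ[|{ω | X ω = x}])) := by
      intro a ha
      rw [integral_finset_sum _ (fun k _ => integrable_finset_sum _ fun δ _ =>
        hpieceIntL x a k δ)]
      refine Finset.sum_congr rfl fun k hk => ?_
      rw [integral_finset_sum _ (fun δ _ => hpieceIntL x a k δ),
        Finset.sum_range_succ, Finset.sum_range_one,
        hatomL x a k 0 ha hk, hatomL x a k 1 ha hk]
      push_cast
      linear_combination (∫ ω, Ycf (d x) k ω ∂(μ[|{ω | X ω = x}])) * hkey x a k
    rw [Finset.sum_congr rfl step_a, Finset.sum_comm]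
    refine Finset.sum_congr rfl fun k hk => ?_
    rw [Finset.sum_range_succ, Finset.sum_range_one]
    have h3 : (μ {ω | X ω = x ∧ K ω = k}).toReal =
        (μ {ω | X ω = x}).toReal * (μ[|{ω | X ω = x}] {ω | K ω = k}).toReal := by
      have hset : {ω | X ω = x ∧ K ω = k} = {ω | X ω = x} ∩ {ω | K ω = k} := by
        ext ω; simp only [Set.mem_setOf_eq, Set.mem_inter_iff]
      rw [hset, auxVEE_meas_cond μ (hmX x)]
    rw [h3, ← hGsum x]
    ring
  -- RHS computation
  have hRHS : (∫ ω, ∑ k ∈ Finset.Icc 1 κ,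
      (if K ω = k then (1 : ℝ) else 0) * Ycf (d (X ω)) k ω ∂μ) =
      ∑ x ∈ Finset.univ, ∑ k ∈ Finset.Icc 1 κ,
        (μ {ω | X ω = x ∧ K ω = k}).toReal * ∫ ω, Ycf (d x) k ω ∂(μ[|{ω | X ω = x}]) := by
    simp only [hgpt]
    rw [integral_finset_sum _ (fun x _ => integrable_finset_sum _ fun a _ =>
      integrable_finset_sum _ fun k _ => integrable_finset_sum _ fun δ _ => hpieceIntR x a k δ)]
    refine Finset.sum_congr rfl fun x _ => ?_
    rw [integral_finset_sum _ (fun a _ => integrable_finset_sum _ fun k _ =>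
      integrable_finset_sum _ fun δ _ => hpieceIntR x a k δ)]
    have step_a : ∀ a ∈ Finset.range 2,
        (∫ ω, ∑ k ∈ Finset.Icc 1 κ, ∑ δ ∈ Finset.range 2,
          Set.indicator {ω' | X ω' = x ∧ A ω' = a ∧ K ω' = k ∧ Δ ω' = δ}
            (fun ω' => Ycf (d x) k ω') ω ∂μ) =
        ∑ k ∈ Finset.Icc 1 κ, (μ {ω | X ω = x ∧ A ω = a ∧ K ω = k}).toReal *
          ∫ ω, Ycf (d x) k ω ∂(μ[|{ω | X ω = x}]) := by
      intro a _
      rw [integral_finset_sum _ (fun k _ => integrable_finset_sum _ fun δ _ =>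
        hpieceIntR x a k δ)]
      refine Finset.sum_congr rfl fun k hk => ?_
      rw [integral_finset_sum _ (fun δ _ => hpieceIntR x a k δ),
        Finset.sum_range_succ, Finset.sum_range_one,
        hatomR x a k 0 hk, hatomR x a k 1 hk]
      linear_combination (∫ ω, Ycf (d x) k ω ∂(μ[|{ω | X ω = x}])) * hDsum x a k
    rw [Finset.sum_congr rfl step_a, Finset.sum_comm]
    refine Finset.sum_congr rfl fun k hk => ?_
    rw [Finset.sum_range_succ, Finset.sum_range_one]
    linear_combination (∫ ω, Ycf (d x) k ω ∂(μ[|{ω | X ω = x}])) * hHsum x k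
  have hmain := hLHS.trans hRHS.symm
  -- E[Δ/c(A,X)] = 1
  have hCeq : (∫ ω, (Δ ω : ℝ) / c (A ω) (X ω) ∂μ) = 1 := by
    simp only [hdcpt]
    rw [integral_finset_sum _ (fun x _ => integrable_finset_sum _ fun a _ =>
      integrable_finset_sum _ fun δ _ => hpieceIntC x a δ)]
    have step2 : ∀ x : 𝒳, (∫ ω, ∑ a ∈ Finset.range 2, ∑ δ ∈ Finset.range 2,
        Set.indicator {ω' | X ω' = x ∧ A ω' = a ∧ Δ ω' = δ}
          (fun _ => (δ : ℝ) / c a x) ω ∂μ) = (μ {ω | X ω = x}).toReal := by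
      intro x
      rw [integral_finset_sum _ (fun a _ => integrable_finset_sum _ fun δ _ =>
        hpieceIntC x a δ)]
      have hatomC : ∀ (a δ : ℕ), (∫ ω, Set.indicator {ω' | X ω' = x ∧ A ω' = a ∧ Δ ω' = δ}
          (fun _ => (δ : ℝ) / c a x) ω ∂μ) =
          (μ {ω | X ω = x ∧ A ω = a ∧ Δ ω = δ}).toReal * ((δ : ℝ) / c a x) := by
        intro a δ
        rw [integral_indicator (hmF x a δ), setIntegral_const, smul_eq_mul, measureReal_def]
      rw [Finset.sum_congr rfl (fun a _ => integral_finset_sum _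
        (fun δ _ => hpieceIntC x a δ))]
      simp only [Finset.sum_range_succ, Finset.sum_range_zero, zero_add]
      rw [hatomC 0 0, hatomC 0 1, hatomC 1 0, hatomC 1 1]
      push_cast
      rw [← hGsum x]
      linear_combination hcmass x 0 + hcmass x 1
    rw [Finset.sum_congr rfl (fun x _ => step2 x)]
    have h4 : (∑ x : 𝒳, μ {ω | X ω = x}) = 1 := by
      have h5 := MeasureTheory.sum_measure_preimage_singleton (μ := μ) (Finset.univ : Finset 𝒳)
        (fun y _ => hX (measurableSet_singleton y))
      rw [Finset.coe_univ, Set.preimage_univ, measure_univ] at h5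
      exact h5
    rw [← ENNReal.toReal_sum (fun x _ => measure_ne_top μ _), h4, ENNReal.toReal_one]
  refine ⟨hmain, fun μ₀ => ?_⟩
  have hsplit : ∀ ω : Ω, (Δ ω : ℝ) / c (A ω) (X ω) *
      (Y ω + ((d (X ω) : ℝ) - (A ω : ℝ)) * γ (K ω) (X ω) - μ₀) =
      (Δ ω : ℝ) / c (A ω) (X ω) *
        (Y ω + ((d (X ω) : ℝ) - (A ω : ℝ)) * γ (K ω) (X ω)) -
      μ₀ * ((Δ ω : ℝ) / c (A ω) (X ω)) := fun ω => by ring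
  simp only [hsplit]
  rw [integral_sub hfint (hdcint.const_mul μ₀), integral_const_mul, hCeq, hmain, mul_one,
    sub_eq_zero, eq_comm]
end

section
/- Assume the competing-risks potential-outcome setup, and assume the factorization E[Y(a,k)·1(K=k')|X=x] = P(K=k'|X=x)·E[Y(a,k)|X=x] for all a, k, k' and all x with P(X=x) > 0. Let φ_k(x) = P(K=k|X=x), let ζ₀, ζ₁ : 𝒳 → ℝ be cost functions, and define the weighted rule d_w(x) = 1(Σ_{k=1}^{κ} φ_k(x)·γ_k(x) > ζ₁(x)). Then for every rule d : 𝒳 → {0,1}, E[Σ_{k=1}^{κ} 1(K=k)·Y(d(X),k) − ζ₀(X) − d(X)·ζ₁(X)] ≤ E[Σ_{k=1}^{κ} 1(K=k)·Y(d_w(X),k) − ζ₀(X) − d_w(X)·ζ₁(X)]; that is, d_w maximizes the cost-adjusted expected counterfactual outcome over all rules. -/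
open MeasureTheory ProbabilityTheory

/-- In the competing-risks potential-outcome setup, assuming the
factorization `E[Y(a,k)·1(K=k')|X=x] = P(K=k'|X=x)·E[Y(a,k)|X=x]`, the weighted rule
`d_w(x) = 1(Σₖ φ_k(x)·γ_k(x) > ζ₁(x))` maximizes the cost-adjusted expected counterfactual
outcome `E[Σₖ 1(K=k)·Y(d(X),k) − ζ₀(X) − d(X)·ζ₁(X)]` over all rules `d : 𝒳 → {0,1}`. -/
theorem weighted_rule_optimal
    {Ω 𝒳 : Type*} [MeasurableSpace Ω] [Fintype 𝒳] [MeasurableSpace 𝒳]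
    [MeasurableSingletonClass 𝒳]
    (μ : Measure Ω) [IsProbabilityMeasure μ]
    (κ : ℕ) (X : Ω → 𝒳) (K : Ω → ℕ) (Ycf : ℕ → ℕ → Ω → ℝ)
    (hX : Measurable X) (hK : Measurable K)
    (hYcf : ∀ a k, Measurable (Ycf a k)) (hYint : ∀ a k, Integrable (Ycf a k) μ)
    (hKκ : ∀ ω, K ω ∈ Finset.Icc 1 κ)
    -- cause probabilities φ_k(x) = P(K=k|X=x) and blips γ_k(x) = E[Y(1,k) − Y(0,k)|X=x]
    (φ : ℕ → 𝒳 → ℝ) (γ : ℕ → 𝒳 → ℝ)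
    (hφ : ∀ k x, φ k x = (μ[|{ω | X ω = x}] {ω | K ω = k}).toReal)
    (hγ : ∀ k x, γ k x = ∫ ω, (Ycf 1 k ω - Ycf 0 k ω) ∂(μ[|{ω | X ω = x}]))
    -- factorization: E[Y(a,k)·1(K=k')|X=x] = P(K=k'|X=x)·E[Y(a,k)|X=x]
    (hfact : ∀ a k k' x, a ≤ 1 → k ∈ Finset.Icc 1 κ → k' ∈ Finset.Icc 1 κ →
      μ {ω | X ω = x} ≠ 0 →
      (∫ ω, Ycf a k ω * (if K ω = k' then (1 : ℝ) else 0) ∂(μ[|{ω | X ω = x}])) =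
        φ k' x * ∫ ω, Ycf a k ω ∂(μ[|{ω | X ω = x}]))
    -- cost functions and the weighted rule
    (ζ₀ ζ₁ : 𝒳 → ℝ)
    (dw : 𝒳 → ℕ)
    (hdw : ∀ x, dw x = if (∑ k ∈ Finset.Icc 1 κ, φ k x * γ k x) > ζ₁ x then 1 else 0)
    (d : 𝒳 → ℕ) (hd : ∀ x, d x ≤ 1) :
    ∫ ω, ((∑ k ∈ Finset.Icc 1 κ, (if K ω = k then (1 : ℝ) else 0) * Ycf (d (X ω)) k ω) -
        ζ₀ (X ω) - (d (X ω) : ℝ) * ζ₁ (X ω)) ∂μ ≤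
      ∫ ω, ((∑ k ∈ Finset.Icc 1 κ, (if K ω = k then (1 : ℝ) else 0) * Ycf (dw (X ω)) k ω) -
        ζ₀ (X ω) - (dw (X ω) : ℝ) * ζ₁ (X ω)) ∂μ := by
  classical
  have hsm : ∀ x : 𝒳, MeasurableSet {ω | X ω = x} := fun x =>
    hX (measurableSet_singleton x)
  set g : ℕ → 𝒳 → Ω → ℝ := fun a x ω =>
    (∑ k ∈ Finset.Icc 1 κ, (if K ω = k then (1:ℝ) else 0) * Ycf a k ω) - ζ₀ x - (a : ℝ) * ζ₁ x
    with hg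
  have hTeq : ∀ a k, (fun ω => (if K ω = k then (1:ℝ) else 0) * Ycf a k ω)
      = Set.indicator {ω | K ω = k} (Ycf a k) := by
    intro a k
    funext ω
    by_cases h : K ω = k <;> simp [Set.indicator, h]
  have hKm : ∀ k : ℕ, MeasurableSet {ω | K ω = k} := fun k =>
    hK (measurableSet_singleton k)
  have hTint : ∀ a k, Integrable (fun ω => (if K ω = k then (1:ℝ) else 0) * Ycf a k ω) μ := by
    intro a k
    rw [hTeq]
    exact (hYint a k).indicator (hKm k)
  have hgint : ∀ a x, Integrable (g a x) μ := by
    intro a x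
    exact ((integrable_finset_sum _ (fun k _ => hTint a k)).sub (integrable_const _)).sub
      (integrable_const _)
  -- decomposition of the objective over values of X
  have hdecomp : ∀ e : 𝒳 → ℕ,
      (∫ ω, ((∑ k ∈ Finset.Icc 1 κ, (if K ω = k then (1:ℝ) else 0) * Ycf (e (X ω)) k ω) -
        ζ₀ (X ω) - (e (X ω) : ℝ) * ζ₁ (X ω)) ∂μ)
      = ∑ x : 𝒳, ∫ ω in {ω | X ω = x}, g (e x) x ω ∂μ := by
    intro e
    have heq : (fun ω => ((∑ k ∈ Finset.Icc 1 κ, (if K ω = k then (1:ℝ) else 0) *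
          Ycf (e (X ω)) k ω) - ζ₀ (X ω) - (e (X ω) : ℝ) * ζ₁ (X ω)))
        = fun ω => ∑ x : 𝒳, Set.indicator {ω' | X ω' = x} (g (e x) x) ω := by
      funext ω
      rw [Finset.sum_eq_single (X ω)]
      · rw [Set.indicator_of_mem (by exact rfl)]
      · intro x _ hx
        exact Set.indicator_of_notMem (fun h => hx (by simpa using h.symm)) _
      · intro h; exact absurd (Finset.mem_univ _) h
    rw [heq, integral_finset_sum _ (fun x _ => (hgint (e x) x).indicator (hsm x))]
    exact Finset.sum_congr rfl fun x _ => integral_indicator (hsm x)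
  rw [hdecomp d, hdecomp dw]
  refine Finset.sum_le_sum fun x _ => ?_
  by_cases h0 : μ {ω | X ω = x} = 0
  · simp [Measure.restrict_eq_zero.mpr h0]
  · have hdw1 : dw x ≤ 1 := by rw [hdw]; split <;> simp
    have hne : (μ {ω | X ω = x}).toReal ≠ 0 := by
      simp [ENNReal.toReal_eq_zero_iff, h0, measure_ne_top μ _]
    -- relation between set integral and conditional integral
    have hrel : ∀ f : Ω → ℝ, ∫ ω in {ω | X ω = x}, f ω ∂μ
        = (μ {ω | X ω = x}).toReal * ∫ ω, f ω ∂(μ[|{ω | X ω = x}]) := by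
      intro f
      rw [ProbabilityTheory.cond, integral_smul_measure, ENNReal.toReal_inv, smul_eq_mul,
        ← mul_assoc, mul_inv_cancel₀ hne, one_mul]
    have hYν : ∀ a k, Integrable (Ycf a k) (μ[|{ω | X ω = x}]) := by
      intro a k
      rw [ProbabilityTheory.cond]
      exact ((hYint a k).restrict).smul_measure (ENNReal.inv_ne_top.mpr h0)
    have hTν : ∀ a k, Integrable (fun ω => (if K ω = k then (1:ℝ) else 0) * Ycf a k ω)
        (μ[|{ω | X ω = x}]) := by
      intro a k
      rw [hTeq]
      exact (hYν a k).indicator (hKm k)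
    have hνprob : IsProbabilityMeasure (μ[|{ω | X ω = x}]) :=
      cond_isProbabilityMeasure h0
    -- value of treatment a at x
    have hval : ∀ a : ℕ, a ≤ 1 → ∫ ω, g a x ω ∂(μ[|{ω | X ω = x}])
        = (∑ k ∈ Finset.Icc 1 κ, φ k x * ∫ ω, Ycf a k ω ∂(μ[|{ω | X ω = x}]))
          - ζ₀ x - (a : ℝ) * ζ₁ x := by
      intro a ha
      simp only [hg]
      have hint0 : Integrable (fun ω => ∑ k ∈ Finset.Icc 1 κ,
          (if K ω = k then (1:ℝ) else 0) * Ycf a k ω) (μ[|{ω | X ω = x}]) :=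
        integrable_finset_sum _ (fun k _ => hTν a k)
      have hint1 : Integrable (fun ω => (∑ k ∈ Finset.Icc 1 κ,
          (if K ω = k then (1:ℝ) else 0) * Ycf a k ω) - ζ₀ x) (μ[|{ω | X ω = x}]) :=
        hint0.sub (integrable_const _)
      rw [integral_sub hint1 (integrable_const _), integral_sub hint0 (integrable_const _),
        integral_finset_sum _ (fun k _ => hTν a k), integral_const, integral_const]
      simp only [measure_univ, probReal_univ, ENNReal.toReal_one, one_smul]
      congr 2
      refine Finset.sum_congr rfl fun k hk => ?_
      rw [← hfact a k k x ha hk hk h0]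
      exact integral_congr_ae (Filter.Eventually.of_forall fun ω => mul_comm _ _)
    have hγ' : ∀ k, γ k x = (∫ ω, Ycf 1 k ω ∂(μ[|{ω | X ω = x}]))
        - ∫ ω, Ycf 0 k ω ∂(μ[|{ω | X ω = x}]) := by
      intro k
      rw [hγ]
      exact integral_sub (hYν 1 k) (hYν 0 k)
    rw [hrel, hrel]
    refine mul_le_mul_of_nonneg_left ?_ ENNReal.toReal_nonneg
    rw [hval (d x) (hd x), hval (dw x) hdw1]
    have hS : (∑ k ∈ Finset.Icc 1 κ, φ k x * γ k x)
        = (∑ k ∈ Finset.Icc 1 κ, φ k x * ∫ ω, Ycf 1 k ω ∂(μ[|{ω | X ω = x}]))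
          - ∑ k ∈ Finset.Icc 1 κ, φ k x * ∫ ω, Ycf 0 k ω ∂(μ[|{ω | X ω = x}]) := by
      rw [← Finset.sum_sub_distrib]
      exact Finset.sum_congr rfl fun k _ => by rw [hγ' k, mul_sub]
    rcases Nat.le_one_iff_eq_zero_or_eq_one.mp (hd x) with hdx | hdx <;>
      rw [hdw x] <;> split_ifs with hc <;>
      simp only [hdx, Nat.cast_one, Nat.cast_zero, one_mul, zero_mul] <;>
      linarith [hS]
end

section
/- Assume the competing-risks potential-outcome setup, and assume the factorization E[Y(a,k)·1(K=k')|X=x] = P(K=k'|X=x)·E[Y(a,k)|X=x] for all a, k, k' and all x with P(X=x) > 0. Let ζ₀, ζ₁ : 𝒳 → ℝ be cost functions and define the oracle rule d_o(x,k) = 1(γ_k(x) > ζ₁(x)). Then for every rule d : 𝒳 × {1,…,κ} → {0,1}, E[Σ_{k=1}^{κ} 1(K=k)·Y(d(X,k),k) − ζ₀(X) − d(X,K)·ζ₁(X)] ≤ E[Σ_{k=1}^{κ} 1(K=k)·Y(d_o(X,k),k) − ζ₀(X) − d_o(X,K)·ζ₁(X)]; that is, among all rules allowed to use the failure type K, the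 oracle rule d_o maximizes the cost-adjusted expected counterfactual outcome. -/
open MeasureTheory ProbabilityTheory

section helpers
variable {Ω 𝒳 : Type*} [MeasurableSpace Ω] [Fintype 𝒳] [MeasurableSpace 𝒳]
  [MeasurableSingletonClass 𝒳]

private lemma setIntegral_eq_cond' (μ : Measure Ω) [IsFiniteMeasure μ] {s : Set Ω}
    (hs : μ s ≠ 0) (g : Ω → ℝ) :
    ∫ ω in s, g ω ∂μ = (μ s).toReal * ∫ ω, g ω ∂(μ[|s]) := by
  rw [ProbabilityTheory.cond, integral_smul_measure, ENNReal.toReal_inv, smul_eq_mul]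
  have h1 : (μ s).toReal ≠ 0 := by
    simp [ENNReal.toReal_ne_zero, hs, measure_ne_top]
  field_simp

private lemma integrable_term' (μ : Measure Ω) [IsFiniteMeasure μ] {g₁ g₂ : Ω → ℝ}
    (hg₁ : Measurable g₁) (hg₂ : Measurable g₂)
    (hb₁ : ∀ ω, |g₁ ω| ≤ 1) (hb₂ : ∀ ω, |g₂ ω| ≤ 1)
    {Y : Ω → ℝ} (hYm : Measurable Y)
    (hYi : Integrable Y μ) (c : ℝ) :
    Integrable (fun ω => g₁ ω * (g₂ ω * (Y ω - c))) μ := by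
  have hg : Integrable (fun ω => |Y ω - c|) μ := (hYi.sub (integrable_const c)).abs
  refine hg.mono' ?_ ?_
  · exact (hg₁.mul (hg₂.mul (hYm.sub measurable_const))).aestronglyMeasurable
  · filter_upwards with ω
    have h1 := hb₁ ω; have h2 := hb₂ ω
    have ha1 : (0:ℝ) ≤ |g₁ ω| := abs_nonneg _
    have ha2 : (0:ℝ) ≤ |g₂ ω| := abs_nonneg _
    have ha3 : (0:ℝ) ≤ |Y ω - c| := abs_nonneg _
    calc ‖g₁ ω * (g₂ ω * (Y ω - c))‖ = |g₁ ω| * (|g₂ ω| * |Y ω - c|) := by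
          simp [Real.norm_eq_abs, abs_mul]
      _ ≤ 1 * (1 * |Y ω - c|) := by
          apply mul_le_mul h1 _ (by positivity) (by norm_num)
          exact mul_le_mul h2 le_rfl ha3 (by norm_num)
      _ = |Y ω - c| := by ring

end helpers

/-- In the competing-risks potential-outcome setup with the factorization
`E[Y(a,k)·1(K=k')|X=x] = P(K=k'|X=x)·E[Y(a,k)|X=x]`, the oracle rule
`d_o(x,k) = 1(γ_k(x) > ζ₁(x))` maximizes
`E[Σₖ 1(K=k)·Y(d(X,k),k) − ζ₀(X) − d(X,K)·ζ₁(X)]` over all rules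
`d : 𝒳 × {1,…,κ} → {0,1}` that may use the failure type. -/
theorem oracle_rule_optimal
    {Ω 𝒳 : Type*} [MeasurableSpace Ω] [Fintype 𝒳] [MeasurableSpace 𝒳]
    [MeasurableSingletonClass 𝒳]
    (μ : Measure Ω) [IsProbabilityMeasure μ]
    (κ : ℕ) (X : Ω → 𝒳) (K : Ω → ℕ) (Ycf : ℕ → ℕ → Ω → ℝ)
    (hX : Measurable X) (hK : Measurable K)
    (hYcf : ∀ a k, Measurable (Ycf a k)) (hYint : ∀ a k, Integrable (Ycf a k) μ)
    (hKκ : ∀ ω, K ω ∈ Finset.Icc 1 κ)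
    -- cause probabilities φ_k(x) = P(K=k|X=x) and blips γ_k(x) = E[Y(1,k) − Y(0,k)|X=x]
    (φ : ℕ → 𝒳 → ℝ) (γ : ℕ → 𝒳 → ℝ)
    (hφ : ∀ k x, φ k x = (μ[|{ω | X ω = x}] {ω | K ω = k}).toReal)
    (hγ : ∀ k x, γ k x = ∫ ω, (Ycf 1 k ω - Ycf 0 k ω) ∂(μ[|{ω | X ω = x}]))
    -- factorization: E[Y(a,k)·1(K=k')|X=x] = P(K=k'|X=x)·E[Y(a,k)|X=x]
    (hfact : ∀ a k k' x, a ≤ 1 → k ∈ Finset.Icc 1 κ → k' ∈ Finset.Icc 1 κ →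
      μ {ω | X ω = x} ≠ 0 →
      (∫ ω, Ycf a k ω * (if K ω = k' then (1 : ℝ) else 0) ∂(μ[|{ω | X ω = x}])) =
        φ k' x * ∫ ω, Ycf a k ω ∂(μ[|{ω | X ω = x}]))
    -- cost functions and the oracle rule d_o(x,k) = 1(γ_k(x) > ζ₁(x))
    (ζ₀ ζ₁ : 𝒳 → ℝ)
    (dOr : 𝒳 → ℕ → ℕ)
    (hdo : ∀ x k, dOr x k = if γ k x > ζ₁ x then 1 else 0)
    (d : 𝒳 → ℕ → ℕ) (hd : ∀ x k, d x k ≤ 1) :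
    ∫ ω, ((∑ k ∈ Finset.Icc 1 κ, (if K ω = k then (1 : ℝ) else 0) * Ycf (d (X ω) k) k ω) -
        ζ₀ (X ω) - (d (X ω) (K ω) : ℝ) * ζ₁ (X ω)) ∂μ ≤
      ∫ ω, ((∑ k ∈ Finset.Icc 1 κ,
          (if K ω = k then (1 : ℝ) else 0) * Ycf (dOr (X ω) k) k ω) -
        ζ₀ (X ω) - (dOr (X ω) (K ω) : ℝ) * ζ₁ (X ω)) ∂μ := by
  classical
  have hsm : ∀ x : 𝒳, MeasurableSet {ω | X ω = x} := fun x => hX (measurableSet_singleton x)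
  have hks : ∀ k : ℕ, MeasurableSet {ω | K ω = k} := fun k => hK (measurableSet_singleton k)
  -- integrability of each term
  have hTi : ∀ (x : 𝒳) (k a : ℕ),
      Integrable (fun ω => (if X ω = x then (1:ℝ) else 0) *
        ((if K ω = k then (1:ℝ) else 0) * (Ycf a k ω - (a : ℝ) * ζ₁ x))) μ :=
    fun x k a => by
      refine integrable_term' μ (Measurable.ite (hX (measurableSet_singleton x))
        measurable_const measurable_const)
        (Measurable.ite (hks k) measurable_const measurable_const)
        ?_ ?_ (hYcf a k) (hYint a k) _ <;>
      · intro ω; split_ifs <;> norm_num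
  -- composition with X is integrable
  have hcomp_int : ∀ g : 𝒳 → ℝ, Integrable (fun ω => g (X ω)) μ := by
    intro g
    refine (integrable_const (∑ x : 𝒳, ‖g x‖)).mono'
      ((measurable_of_countable g).comp hX).aestronglyMeasurable ?_
    filter_upwards with ω
    exact Finset.single_le_sum (f := fun x => ‖g x‖) (fun i _ => norm_nonneg _)
      (Finset.mem_univ (X ω))
  -- collapse sums over k
  have hcollapse : ∀ (c : ℕ → ℝ) (ω : Ω),
      ∑ k ∈ Finset.Icc 1 κ, (if K ω = k then (1:ℝ) else 0) * c k = c (K ω) := by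
    intro c ω
    rw [Finset.sum_eq_single (K ω)]
    · simp
    · intro b _ hb; simp [Ne.symm hb]
    · intro h; exact absurd (hKκ ω) h
  -- pointwise decomposition
  have hpt : ∀ (e : 𝒳 → ℕ → ℕ) (ω : Ω),
      ((∑ k ∈ Finset.Icc 1 κ, (if K ω = k then (1 : ℝ) else 0) * Ycf (e (X ω) k) k ω) -
          ζ₀ (X ω) - (e (X ω) (K ω) : ℝ) * ζ₁ (X ω))
      = (∑ x : 𝒳, ∑ k ∈ Finset.Icc 1 κ,
          (if X ω = x then (1:ℝ) else 0) * ((if K ω = k then (1:ℝ) else 0) *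
            (Ycf (e x k) k ω - (e x k : ℝ) * ζ₁ x))) - ζ₀ (X ω) := by
    intro e ω
    rw [Finset.sum_eq_single (X ω)]
    · simp only [eq_self_iff_true, if_true, one_mul]
      have : ∑ k ∈ Finset.Icc 1 κ, (if K ω = k then (1:ℝ) else 0) *
          (Ycf (e (X ω) k) k ω - (e (X ω) k : ℝ) * ζ₁ (X ω))
          = (∑ k ∈ Finset.Icc 1 κ, (if K ω = k then (1:ℝ) else 0) * Ycf (e (X ω) k) k ω)
            - (e (X ω) (K ω) : ℝ) * ζ₁ (X ω) := by
        simp only [mul_sub, Finset.sum_sub_distrib]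
        rw [hcollapse (fun k => (e (X ω) k : ℝ) * ζ₁ (X ω)) ω]
      rw [this]; ring
    · intro b _ hb
      apply Finset.sum_eq_zero
      intro k _
      simp [Ne.symm hb]
    · intro h; exact absurd (Finset.mem_univ _) h
  -- integral decomposition
  have hdecomp : ∀ e : 𝒳 → ℕ → ℕ,
      ∫ ω, ((∑ k ∈ Finset.Icc 1 κ, (if K ω = k then (1 : ℝ) else 0) * Ycf (e (X ω) k) k ω) -
          ζ₀ (X ω) - (e (X ω) (K ω) : ℝ) * ζ₁ (X ω)) ∂μ
      = (∑ x : 𝒳, ∑ k ∈ Finset.Icc 1 κ,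
          ∫ ω, (if X ω = x then (1:ℝ) else 0) * ((if K ω = k then (1:ℝ) else 0) *
            (Ycf (e x k) k ω - (e x k : ℝ) * ζ₁ x)) ∂μ) - ∫ ω, ζ₀ (X ω) ∂μ := by
    intro e
    rw [integral_congr_ae (Filter.Eventually.of_forall (hpt e))]
    rw [integral_sub (integrable_finset_sum _
      (fun x _ => integrable_finset_sum _ (fun k _ => hTi x k _))) (hcomp_int ζ₀)]
    congr 1
    rw [integral_finset_sum _ (fun x _ => integrable_finset_sum _ (fun k _ => hTi x k _))]
    exact Finset.sum_congr rfl fun x _ => integral_finset_sum _ fun k _ => hTi x k _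
  rw [hdecomp d, hdecomp dOr]
  apply sub_le_sub_right
  apply Finset.sum_le_sum
  intro x _
  apply Finset.sum_le_sum
  intro k hk
  -- per term inequality
  by_cases hx : μ {ω | X ω = x} = 0
  · -- everything is zero
    have hz : ∀ a : ℕ, ∫ ω, (if X ω = x then (1:ℝ) else 0) * ((if K ω = k then (1:ℝ) else 0) *
        (Ycf a k ω - (a : ℝ) * ζ₁ x)) ∂μ = 0 := by
      intro a
      apply integral_eq_zero_of_ae
      have h0 : ∀ᵐ ω ∂μ, X ω ≠ x := by
        rw [ae_iff]
        simpa using hx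
      filter_upwards [h0] with ω h
      simp [h]
    rw [hz, hz]
  · -- main case
    haveI : IsProbabilityMeasure (μ[|{ω | X ω = x}]) := cond_isProbabilityMeasure hx
    set ν := μ[|{ω | X ω = x}] with hν
    have hIntν : ∀ a : ℕ, Integrable (Ycf a k) ν := by
      intro a
      rw [hν, ProbabilityTheory.cond]
      exact ((hYint a k).restrict).smul_measure (ENNReal.inv_ne_top.mpr hx)
    have hIndν : Integrable (fun ω => (if K ω = k then (1:ℝ) else 0)) ν := by
      have : (fun ω => if K ω = k then (1:ℝ) else 0)
          = Set.indicator {ω | K ω = k} (fun _ => (1:ℝ)) := by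
        funext ω; by_cases h : K ω = k <;> simp [h]
      rw [this]
      exact (integrable_const (1:ℝ)).indicator (hks k)
    have hprodν : ∀ a : ℕ, Integrable (fun ω => Ycf a k ω * (if K ω = k then (1:ℝ) else 0)) ν := by
      intro a
      refine (hIntν a).abs.mono' ?_ ?_
      · exact ((hYcf a k).mul (Measurable.ite (hks k)
          measurable_const measurable_const)).aestronglyMeasurable
      · filter_upwards with ω
        by_cases h : K ω = k <;> simp [h, Real.norm_eq_abs, abs_nonneg]
    have hindval : ∫ ω, (if K ω = k then (1:ℝ) else 0) ∂ν = φ k x := by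
      have h1 : (fun ω => if K ω = k then (1:ℝ) else 0)
          = Set.indicator {ω | K ω = k} (fun _ => (1:ℝ)) := by
        funext ω; by_cases h : K ω = k <;> simp [h]
      rw [h1, integral_indicator_const (1:ℝ) (hks k), hφ, smul_eq_mul,
        mul_one]
      rfl
    -- value formula
    have hval : ∀ a : ℕ, a ≤ 1 →
        ∫ ω, (if X ω = x then (1:ℝ) else 0) * ((if K ω = k then (1:ℝ) else 0) *
          (Ycf a k ω - (a : ℝ) * ζ₁ x)) ∂μ
        = (μ {ω | X ω = x}).toReal * (φ k x *
            ((∫ ω, Ycf a k ω ∂ν) - (a : ℝ) * ζ₁ x)) := by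
      intro a ha
      have h1 : ∫ ω, (if X ω = x then (1:ℝ) else 0) * ((if K ω = k then (1:ℝ) else 0) *
            (Ycf a k ω - (a : ℝ) * ζ₁ x)) ∂μ
          = ∫ ω in {ω | X ω = x}, ((if K ω = k then (1:ℝ) else 0) *
            (Ycf a k ω - (a : ℝ) * ζ₁ x)) ∂μ := by
        rw [← integral_indicator (hsm x)]
        congr 1
        funext ω
        by_cases h : X ω = x <;> simp [Set.indicator, h]
      rw [h1, setIntegral_eq_cond' μ hx]
      congr 1
      have hsplit : (fun ω => (if K ω = k then (1:ℝ) else 0) * (Ycf a k ω - (a : ℝ) * ζ₁ x))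
          = fun ω => Ycf a k ω * (if K ω = k then (1:ℝ) else 0)
            - ((a : ℝ) * ζ₁ x) * (if K ω = k then (1:ℝ) else 0) := by
        funext ω; ring
      calc ∫ ω, (if K ω = k then (1:ℝ) else 0) * (Ycf a k ω - (a:ℝ) * ζ₁ x) ∂ν
          = (∫ ω, Ycf a k ω * (if K ω = k then (1:ℝ) else 0) ∂ν)
            - ∫ ω, ((a : ℝ) * ζ₁ x) * (if K ω = k then (1:ℝ) else 0) ∂ν := by
            rw [hsplit, integral_sub (hprodν a) (hIndν.const_mul _)]
        _ = φ k x * (∫ ω, Ycf a k ω ∂ν) - ((a:ℝ) * ζ₁ x) * φ k x := by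
            rw [hfact a k k x ha hk hk hx, integral_const_mul, hindval]
        _ = φ k x * ((∫ ω, Ycf a k ω ∂ν) - (a : ℝ) * ζ₁ x) := by ring
    have hdo1 : dOr x k ≤ 1 := by rw [hdo]; split_ifs <;> simp
    rw [hval _ (hd x k), hval _ hdo1]
    have hγ' : γ k x = (∫ ω, Ycf 1 k ω ∂ν) - ∫ ω, Ycf 0 k ω ∂ν := by
      rw [hγ]
      exact integral_sub (hIntν 1) (hIntν 0)
    apply mul_le_mul_of_nonneg_left _ ENNReal.toReal_nonneg
    apply mul_le_mul_of_nonneg_left _ (by rw [hφ]; exact ENNReal.toReal_nonneg)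
    -- core inequality
    by_cases hgc : γ k x > ζ₁ x
    · have hdor : dOr x k = 1 := by rw [hdo, if_pos hgc]
      rw [hdor]
      rcases Nat.le_one_iff_eq_zero_or_eq_one.mp (hd x k) with h | h <;> rw [h] <;>
        push_cast <;> linarith [hγ']
    · have hdor : dOr x k = 0 := by rw [hdo, if_neg hgc]
      rw [hdor]
      have := not_lt.mp hgc
      rcases Nat.le_one_iff_eq_zero_or_eq_one.mp (hd x k) with h | h <;> rw [h] <;>
        push_cast <;> linarith [hγ']
end

section
/- Assume the competing-risks potential-outcome setup. Let φ_k(x) = P(K=k|X=x), let k*(x) be the smallest index k maximizing φ_k(x), let ζ₀, ζ₁ : 𝒳 → ℝ be cost functions, and define the greedy rule d_g(x) = 1(γ_{k*(x)}(x) > ζ₁(x)). Then for every rule d : 𝒳 → {0,1}, E[Y(d(X), k*(X)) − ζ₀(X) − d(X)·ζ₁(X)] ≤ E[Y(d_g(X), k*(X)) − ζ₀(X) − d_g(X)·ζ₁(X)]; that is, d_g maximizes the cost-adjusted expected counterfactual outcome associated with the most probable cause of failure. -/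
open MeasureTheory ProbabilityTheory

lemma cond_key {Ω : Type*} [MeasurableSpace Ω] (μ : Measure Ω) [IsProbabilityMeasure μ]
    (s : Set Ω) (hs : MeasurableSet s) (Y1 Y0 : Ω → ℝ)
    (h1 : Integrable Y1 μ) (h0 : Integrable Y0 μ) :
    ∫ ω in s, Y1 ω ∂μ - ∫ ω in s, Y0 ω ∂μ =
      (μ s).toReal * ∫ ω, (Y1 ω - Y0 ω) ∂(μ[|s]) := by
  have hsub : ∫ ω in s, Y1 ω ∂μ - ∫ ω in s, Y0 ω ∂μ = ∫ ω in s, (Y1 ω - Y0 ω) ∂μ :=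
    (integral_sub (h1.restrict) (h0.restrict)).symm
  rw [hsub]
  by_cases h0' : μ s = 0
  · rw [Measure.restrict_eq_zero.mpr h0', h0']
    simp [ProbabilityTheory.cond, Measure.restrict_eq_zero.mpr h0']
  · rw [ProbabilityTheory.cond, integral_smul_measure]
    have hne : μ s ≠ ⊤ := (measure_lt_top μ s).ne
    rw [smul_eq_mul, ← mul_assoc, ENNReal.toReal_inv,
      mul_inv_cancel₀ (by simpa [ENNReal.toReal_eq_zero_iff, hne] using h0'), one_mul]

/-- In the competing-risks potential-outcome setup, with
`φ_k(x) = P(K=k|X=x)`, `k*(x)` the smallest index maximizing `φ_k(x)`, and the greedy rule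
`d_g(x) = 1(γ_{k*(x)}(x) > ζ₁(x))`, the greedy rule maximizes
`E[Y(d(X),k*(X)) − ζ₀(X) − d(X)·ζ₁(X)]` over all rules `d : 𝒳 → {0,1}`. -/
theorem greedy_rule_optimal
    {Ω 𝒳 : Type*} [MeasurableSpace Ω] [Fintype 𝒳] [MeasurableSpace 𝒳]
    [MeasurableSingletonClass 𝒳]
    (μ : Measure Ω) [IsProbabilityMeasure μ]
    (κ : ℕ) (hκ : 1 ≤ κ) (X : Ω → 𝒳) (K : Ω → ℕ) (Ycf : ℕ → ℕ → Ω → ℝ)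
    (hX : Measurable X) (hK : Measurable K)
    (hYcf : ∀ a k, Measurable (Ycf a k)) (hYint : ∀ a k, Integrable (Ycf a k) μ)
    (hKκ : ∀ ω, K ω ∈ Finset.Icc 1 κ)
    -- cause probabilities φ_k(x) = P(K=k|X=x) and blips γ_k(x) = E[Y(1,k) − Y(0,k)|X=x]
    (φ : ℕ → 𝒳 → ℝ) (γ : ℕ → 𝒳 → ℝ)
    (hφ : ∀ k x, φ k x = (μ[|{ω | X ω = x}] {ω | K ω = k}).toReal)
    (hγ : ∀ k x, γ k x = ∫ ω, (Ycf 1 k ω - Ycf 0 k ω) ∂(μ[|{ω | X ω = x}]))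
    -- k*(x): the smallest index in {1,…,κ} maximizing φ_k(x)
    (kstar : 𝒳 → ℕ)
    (hkmem : ∀ x, kstar x ∈ Finset.Icc 1 κ)
    (hkmax : ∀ x, ∀ k ∈ Finset.Icc 1 κ, φ k x ≤ φ (kstar x) x)
    (hkmin : ∀ x, ∀ k ∈ Finset.Icc 1 κ, φ k x = φ (kstar x) x → kstar x ≤ k)
    -- cost functions and the greedy rule d_g(x) = 1(γ_{k*(x)}(x) > ζ₁(x))
    (ζ₀ ζ₁ : 𝒳 → ℝ)
    (dg : 𝒳 → ℕ)
    (hdg : ∀ x, dg x = if γ (kstar x) x > ζ₁ x then 1 else 0)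
    (d : 𝒳 → ℕ) (hd : ∀ x, d x ≤ 1) :
    ∫ ω, (Ycf (d (X ω)) (kstar (X ω)) ω - ζ₀ (X ω) - (d (X ω) : ℝ) * ζ₁ (X ω)) ∂μ ≤
      ∫ ω, (Ycf (dg (X ω)) (kstar (X ω)) ω - ζ₀ (X ω) - (dg (X ω) : ℝ) * ζ₁ (X ω)) ∂μ := by
  classical
  set s : 𝒳 → Set Ω := fun x => X ⁻¹' {x} with hs_def
  have hsm : ∀ x, MeasurableSet (s x) := fun x => hX (measurableSet_singleton x)
  -- generic decomposition of the objective for a rule e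
  have hdecomp : ∀ e : 𝒳 → ℕ,
      ∫ ω, (Ycf (e (X ω)) (kstar (X ω)) ω - ζ₀ (X ω) - (e (X ω) : ℝ) * ζ₁ (X ω)) ∂μ =
        ∑ x : 𝒳, (∫ ω in s x, Ycf (e x) (kstar x) ω ∂μ
          - (μ (s x)).toReal * (ζ₀ x + (e x : ℝ) * ζ₁ x)) := by
    intro e
    have hfun : (fun ω => Ycf (e (X ω)) (kstar (X ω)) ω - ζ₀ (X ω) - (e (X ω) : ℝ) * ζ₁ (X ω))
        = fun ω => ∑ x : 𝒳, (s x).indicator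
            (fun ω => Ycf (e x) (kstar x) ω - (ζ₀ x + (e x : ℝ) * ζ₁ x)) ω := by
      funext ω
      rw [Finset.sum_eq_single (X ω)]
      · simp only [s, Set.indicator_of_mem (by simp : ω ∈ X ⁻¹' {X ω})]
        ring
      · intro x _ hx
        exact Set.indicator_of_notMem (by simpa [s, eq_comm] using hx) _
      · simp
    have hint : ∀ x : 𝒳, Integrable ((s x).indicator
        (fun ω => Ycf (e x) (kstar x) ω - (ζ₀ x + (e x : ℝ) * ζ₁ x))) μ :=
      fun x => ((hYint (e x) (kstar x)).sub (integrable_const _)).indicator (hsm x)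
    rw [hfun, integral_finset_sum _ (fun x _ => hint x)]
    refine Finset.sum_congr rfl fun x _ => ?_
    rw [integral_indicator (hsm x),
      integral_sub ((hYint (e x) (kstar x)).restrict) (integrable_const _).restrict,
      setIntegral_const, smul_eq_mul, sub_right_inj, measureReal_def]
  rw [hdecomp d, hdecomp dg]
  refine Finset.sum_le_sum fun x _ => ?_
  -- key identity relating the blip to set integrals
  have hkey : ∫ ω in s x, Ycf 1 (kstar x) ω ∂μ - ∫ ω in s x, Ycf 0 (kstar x) ω ∂μ
      = (μ (s x)).toReal * γ (kstar x) x := by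
    rw [hγ]
    exact cond_key μ (s x) (hsm x) _ _ (hYint 1 (kstar x)) (hYint 0 (kstar x))
  have hc0 : (0:ℝ) ≤ (μ (s x)).toReal := ENNReal.toReal_nonneg
  set c := (μ (s x)).toReal
  -- case on d x (0 or 1) and dg x
  have hd' : d x ≤ 1 := hd x
  interval_cases h : d x
  · -- d x = 0
    rw [hdg x]
    split_ifs with hgt
    · -- dg = 1, γ > ζ₁ : need ∫ Y0 - c(ζ₀) ≤ ∫ Y1 - c(ζ₀ + ζ₁)
      push_cast
      have : c * ζ₁ x ≤ c * γ (kstar x) x := mul_le_mul_of_nonneg_left hgt.le hc0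
      nlinarith [hkey]
    · push_cast; linarith
  · -- d x = 1
    rw [hdg x]
    split_ifs with hgt
    · push_cast; linarith
    · push_cast
      have hle : γ (kstar x) x ≤ ζ₁ x := not_lt.mp hgt
      have : c * γ (kstar x) x ≤ c * ζ₁ x := mul_le_mul_of_nonneg_left hle hc0
      nlinarith [hkey]
end

section
/- On a probability space let X take values in a finite set 𝒳 and A ∈ {0,1} be a binary treatment. For each a ∈ {0,1}, let Y(a) be an integrable real random variable and K(a) a random variable in {1,…,κ} (the counterfactual outcome and failure type under treatment a). Assume consistency, Y = Σ_{a∈{0,1}} 1(A=a)·Y(a) and K = Σ_{a∈{0,1}} 1(A=a)·K(a), and sequential ignorability in the form: for all a, k and all x with P(X=x,A=a) > 0, P(K(a)=k | X=x, A=a) = P(K(a)=k | X=x) and E[Y(a)·1(K(a)=k) | X=x, A=a] = E[Y(a)·1(K(a)=k) | X=x]. Then for every a and every x with P(X=x,A=a,K=k) > 0 for all k, E[Y(a) | X=x] = Σ_{k=1}^{κ} P(K=k | X=x, A=a)·E[Y | X=x, A=a, K=k]. -/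
open MeasureTheory ProbabilityTheory

/-!
Split `E[Y(a) | X=x]` along the values `k` of `K(a)`. Ignorability moves each piece
`E[Y(a)·1(K(a)=k) | X=x]` into the stratum `A = a`, where consistency turns it into
`E[Y·1(K=k) | X=x, A=a] = P(K=k | X=x, A=a)·E[Y | X=x, A=a, K=k]`.
-/

section

variable {Ω β E : Type*}

theorem mul_ite_eq_indicator [DecidableEq β] (f : Ω → ℝ) (g : Ω → β) (k : β) :
    (fun ω ↦ f ω * if g ω = k then (1 : ℝ) else 0) = {ω | g ω = k}.indicator f := by
  ext ω
  by_cases h : g ω = k <;> simp [h]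

variable [MeasurableSpace Ω] [NormedAddCommGroup E]

theorem MeasureTheory.Integrable.cond {μ : Measure Ω} {f : Ω → E} (hf : Integrable f μ)
    (s : Set Ω) : Integrable f μ[|s] := by
  rcases eq_or_ne (μ s) 0 with hs | hs
  · simp [cond_eq_zero_of_meas_eq_zero hs]
  · exact hf.restrict.smul_measure (ENNReal.inv_ne_top.mpr hs)

theorem setIntegral_eq_toReal_mul_integral_cond [NormedSpace ℝ E] {ν : Measure Ω}
    [IsFiniteMeasure ν] {B : Set Ω} (f : Ω → E) :
    ∫ ω in B, f ω ∂ν = (ν B).toReal • ∫ ω, f ω ∂ν[|B] := by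
  rcases eq_or_ne (ν B) 0 with hB | hB
  · simp [Measure.restrict_eq_zero.mpr hB, hB]
  · rw [ProbabilityTheory.cond, integral_smul_measure, smul_smul, ENNReal.toReal_inv,
      mul_inv_cancel₀ (ENNReal.toReal_ne_zero.mpr ⟨hB, measure_ne_top ν B⟩), one_smul]

variable [DecidableEq β] [MeasurableSpace β] [MeasurableSingletonClass β]

theorem integral_eq_sum_integral_mul_ite {ν : Measure Ω} {f : Ω → ℝ} {g : Ω → β}
    {t : Finset β} (hf : Integrable f ν) (hg : Measurable g) (hgt : ∀ᵐ ω ∂ν, g ω ∈ t) :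
    ∫ ω, f ω ∂ν = ∑ k ∈ t, ∫ ω, f ω * (if g ω = k then (1 : ℝ) else 0) ∂ν := by
  have hint (k : β) : Integrable (fun ω ↦ f ω * if g ω = k then (1 : ℝ) else 0) ν := by
    rw [mul_ite_eq_indicator]
    exact hf.indicator (hg (measurableSet_singleton k))
  rw [← integral_finsetSum t fun k _ ↦ hint k]
  refine integral_congr_ae ?_
  filter_upwards [hgt] with ω hω
  simp [hω]

theorem integral_mul_ite_cond_eq {μ : Measure Ω} [IsFiniteMeasure μ] {s : Set Ω}
    (hs : MeasurableSet s) (f : Ω → ℝ) {g : Ω → β} (hg : Measurable g) (k : β) :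
    ∫ ω, f ω * (if g ω = k then (1 : ℝ) else 0) ∂μ[|s] =
      (μ[|s] {ω | g ω = k}).toReal * ∫ ω, f ω ∂μ[|s ∩ {ω | g ω = k}] := by
  have hgk : MeasurableSet {ω | g ω = k} := hg (measurableSet_singleton k)
  rw [mul_ite_eq_indicator, integral_indicator hgk, setIntegral_eq_toReal_mul_integral_cond,
    cond_cond_eq_cond_inter hs hgk, smul_eq_mul]

end

theorem sequential_ignorability_identification_general
    {Ω 𝒳 : Type*} [MeasurableSpace Ω] [MeasurableSpace 𝒳]
    [MeasurableSingletonClass 𝒳]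
    (μ : Measure Ω) [IsProbabilityMeasure μ]
    (κ : ℕ) (X : Ω → 𝒳) (A K : Ω → ℕ) (Y : Ω → ℝ)
    (Ycf : ℕ → Ω → ℝ) (Kcf : ℕ → Ω → ℕ)
    (hX : Measurable X) (hA : Measurable A) (hK : Measurable K)
    (hKcf : ∀ a, Measurable (Kcf a))
    (hYint : ∀ a, Integrable (Ycf a) μ)
    (hKcfκ : ∀ a ω, a ≤ 1 → Kcf a ω ∈ Finset.Icc 1 κ)
    -- consistency: Y = Σₐ 1(A=a)·Y(a) and K = Σₐ 1(A=a)·K(a)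
    (hconsY : ∀ ω, Y ω = ∑ a ∈ Finset.range 2,
        (if A ω = a then (1 : ℝ) else 0) * Ycf a ω)
    (hconsK : ∀ ω, K ω = ∑ a ∈ Finset.range 2,
        (if A ω = a then 1 else 0) * Kcf a ω)
    -- sequential ignorability
    (hig2 : ∀ a k x, a ≤ 1 → μ {ω | X ω = x ∧ A ω = a} ≠ 0 →
      (∫ ω, Ycf a ω * (if Kcf a ω = k then (1 : ℝ) else 0)
          ∂(μ[|{ω | X ω = x ∧ A ω = a}])) =
        ∫ ω, Ycf a ω * (if Kcf a ω = k then (1 : ℝ) else 0) ∂(μ[|{ω | X ω = x}])) :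
    ∀ a x, a ≤ 1 →
      (∀ k ∈ Finset.Icc 1 κ, μ {ω | X ω = x ∧ A ω = a ∧ K ω = k} ≠ 0) →
      (∫ ω, Ycf a ω ∂(μ[|{ω | X ω = x}])) =
        ∑ k ∈ Finset.Icc 1 κ,
          (μ[|{ω | X ω = x ∧ A ω = a}] {ω | K ω = k}).toReal *
            ∫ ω, Y ω ∂(μ[|{ω | X ω = x ∧ A ω = a ∧ K ω = k}]) := by
  intro a x ha hpos
  set S := {ω | X ω = x ∧ A ω = a}
  have hS : MeasurableSet S :=
    (hX (measurableSet_singleton x)).inter (hA (measurableSet_singleton a))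
  have hobserved : ∀ ω ∈ S, Y ω = Ycf a ω ∧ K ω = Kcf a ω := by
    rintro ω ⟨-, hAω⟩
    have ha2 : a ∈ Finset.range 2 := Finset.mem_range.mpr (Nat.lt_succ_of_le ha)
    simp [hconsY, hconsK, hAω, ha2]
  rw [integral_eq_sum_integral_mul_ite ((hYint a).cond _) (hKcf a)
    (ae_of_all _ fun ω ↦ hKcfκ a ω ha)]
  refine Finset.sum_congr rfl fun k hk ↦ ?_
  have hSk : {ω | X ω = x ∧ A ω = a ∧ K ω = k} = S ∩ {ω | K ω = k} := by
    ext ω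
    simp [S, and_assoc]
  have hS0 : μ S ≠ 0 := fun h0 ↦
    hpos k hk (measure_mono_null (fun ω hω ↦ (⟨hω.1, hω.2.1⟩ : ω ∈ S)) h0)
  rw [hSk, ← integral_mul_ite_cond_eq hS Y hK k, ← hig2 a k x ha hS0]
  refine integral_congr_ae ?_
  filter_upwards [ae_cond_mem hS] with ω hω
  rw [(hobserved ω hω).1, (hobserved ω hω).2]

/-- Under consistency and sequential ignorability (for the counterfactual
pair `(Y(a), K(a))`), the mean counterfactual outcome under treatment `a` is identified by
averaging the observed cause-specific conditional means with the observed cause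
probabilities: `E[Y(a) | X=x] = Σₖ P(K=k | X=x, A=a)·E[Y | X=x, A=a, K=k]`. -/
theorem sequential_ignorability_identification
    {Ω 𝒳 : Type*} [MeasurableSpace Ω] [Fintype 𝒳] [MeasurableSpace 𝒳]
    [MeasurableSingletonClass 𝒳]
    (μ : Measure Ω) [IsProbabilityMeasure μ]
    (κ : ℕ) (X : Ω → 𝒳) (A K : Ω → ℕ) (Y : Ω → ℝ)
    (Ycf : ℕ → Ω → ℝ) (Kcf : ℕ → Ω → ℕ)
    (hX : Measurable X) (hA : Measurable A) (hK : Measurable K) (hY : Measurable Y)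
    (hYcf : ∀ a, Measurable (Ycf a)) (hKcf : ∀ a, Measurable (Kcf a))
    (hYint : ∀ a, Integrable (Ycf a) μ)
    (hA01 : ∀ ω, A ω ≤ 1)
    (hKcfκ : ∀ a ω, a ≤ 1 → Kcf a ω ∈ Finset.Icc 1 κ)
    -- consistency: Y = Σₐ 1(A=a)·Y(a) and K = Σₐ 1(A=a)·K(a)
    (hconsY : ∀ ω, Y ω = ∑ a ∈ Finset.range 2,
        (if A ω = a then (1 : ℝ) else 0) * Ycf a ω)
    (hconsK : ∀ ω, K ω = ∑ a ∈ Finset.range 2,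
        (if A ω = a then 1 else 0) * Kcf a ω)
    -- sequential ignorability
    (hig1 : ∀ a k x, a ≤ 1 → μ {ω | X ω = x ∧ A ω = a} ≠ 0 →
      (μ[|{ω | X ω = x ∧ A ω = a}] {ω | Kcf a ω = k}).toReal =
        (μ[|{ω | X ω = x}] {ω | Kcf a ω = k}).toReal)
    (hig2 : ∀ a k x, a ≤ 1 → μ {ω | X ω = x ∧ A ω = a} ≠ 0 →
      (∫ ω, Ycf a ω * (if Kcf a ω = k then (1 : ℝ) else 0)
          ∂(μ[|{ω | X ω = x ∧ A ω = a}])) =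
        ∫ ω, Ycf a ω * (if Kcf a ω = k then (1 : ℝ) else 0) ∂(μ[|{ω | X ω = x}])) :
    ∀ a x, a ≤ 1 →
      (∀ k ∈ Finset.Icc 1 κ, μ {ω | X ω = x ∧ A ω = a ∧ K ω = k} ≠ 0) →
      (∫ ω, Ycf a ω ∂(μ[|{ω | X ω = x}])) =
        ∑ k ∈ Finset.Icc 1 κ,
          (μ[|{ω | X ω = x ∧ A ω = a}] {ω | K ω = k}).toReal *
            ∫ ω, Y ω ∂(μ[|{ω | X ω = x ∧ A ω = a ∧ K ω = k}]) :=
  sequential_ignorability_identification_general μ κ X A K Y Ycf Kcf hX hA hK hKcf hYint hKcfκ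
    hconsY hconsK hig2
end

section
/- Assume the competing-risks potential-outcome setup with consistency, NUC/CAR mean-independence, and failure-type exogeneity, and suppose b(x) = P(A=1|X=x) ∈ (0,1) and c(a,x) = P(Δ=1|A=a,X=x) ∈ (0,1) for all x with P(X=x) > 0, and that the weight function w(δ,a,x) satisfies the balancing property at every such x. Then for every k ∈ {1,…,κ}, every bounded function u : 𝒳 → ℝ, and every (arbitrary, possibly misspecified) function m̃ : 𝒳 → ℝ, E[1(K=k)·Δ·w(Δ,A,X)·(2A−1)·u(X)·(Y − A·γ_k(X) − m̃(X))] = 0, where γ_k is the true blip. In particular, with balanced weights the treatment-effect component of the weighted estimating equation is unbiased at the true blip parameters even when the treatment-free model is misspecified. -/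
open MeasureTheory ProbabilityTheory

section Aux

variable {Ω : Type*} [MeasurableSpace Ω] {μ : Measure Ω}

lemma aux_cond_integral (μ : Measure Ω) (S : Set Ω) (f : Ω → ℝ) :
    ∫ ω, f ω ∂(μ[|S]) = ((μ S)⁻¹).toReal * ∫ ω in S, f ω ∂μ := by
  rw [ProbabilityTheory.cond, integral_smul_measure, smul_eq_mul]

lemma aux_cond_integrable {f : Ω → ℝ} (h : Integrable f μ) {S : Set Ω} (hS : μ S ≠ 0) :
    Integrable f (μ[|S]) :=
  (h.restrict).smul_measure (ENNReal.inv_ne_top.2 hS)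

end Aux

/-- Weights-correct half of double robustness (Theorem 1 of the paper):
in the competing-risks potential-outcome setup with consistency, NUC/CAR
mean-independence, failure-type exogeneity, `b(x) = P(A=1|X=x) ∈ (0,1)`,
`c(a,x) = P(Δ=1|A=a,X=x) ∈ (0,1)`, and weights satisfying the balancing property, the
treatment-effect component of the weighted estimating equation is unbiased at the true
blip even when the treatment-free model `m̃` is misspecified:
`E[1(K=k)·Δ·w(Δ,A,X)·(2A−1)·u(X)·(Y − A·γ_k(X) − m̃(X))] = 0`. -/
theorem balanced_weights_doubly_robust
    {Ω 𝒳 : Type*} [MeasurableSpace Ω] [Fintype 𝒳] [MeasurableSpace 𝒳]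
    [MeasurableSingletonClass 𝒳]
    (μ : Measure Ω) [IsProbabilityMeasure μ]
    (κ : ℕ) (X : Ω → 𝒳) (A Δ K : Ω → ℕ) (Y : Ω → ℝ) (Ycf : ℕ → ℕ → Ω → ℝ)
    (hX : Measurable X) (hA : Measurable A) (hΔ : Measurable Δ) (hK : Measurable K)
    (hY : Measurable Y) (hYcf : ∀ a k, Measurable (Ycf a k))
    (hYint : ∀ a k, Integrable (Ycf a k) μ)
    (hA01 : ∀ ω, A ω ≤ 1) (hΔ01 : ∀ ω, Δ ω ≤ 1) (hKκ : ∀ ω, K ω ∈ Finset.Icc 1 κ)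
    -- consistency
    (hcons : ∀ ω, Y ω = ∑ a ∈ Finset.range 2, ∑ k ∈ Finset.Icc 1 κ,
        (if A ω = a then (1 : ℝ) else 0) * (if K ω = k then (1 : ℝ) else 0) * Ycf a k ω)
    -- blip: γ_k(x) = E[Y(1,k) − Y(0,k) | X=x]
    (γ : ℕ → 𝒳 → ℝ)
    (hγ : ∀ k x, γ k x = ∫ ω, (Ycf 1 k ω - Ycf 0 k ω) ∂(μ[|{ω | X ω = x}]))
    -- NUC/CAR mean-independence
    (hnuc : ∀ a k, a ≤ 1 → k ∈ Finset.Icc 1 κ → ∀ x a' k' δ,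
      μ {ω | X ω = x ∧ A ω = a' ∧ K ω = k' ∧ Δ ω = δ} ≠ 0 →
      (∫ ω, Ycf a k ω ∂(μ[|{ω | X ω = x ∧ A ω = a' ∧ K ω = k' ∧ Δ ω = δ}])) =
        ∫ ω, Ycf a k ω ∂(μ[|{ω | X ω = x}]))
    -- failure-type exogeneity
    (hexo : ∀ x a δ k, μ {ω | X ω = x ∧ A ω = a ∧ Δ ω = δ} ≠ 0 →
      (μ[|{ω | X ω = x ∧ A ω = a ∧ Δ ω = δ}] {ω | K ω = k}).toReal =
        (μ[|{ω | X ω = x}] {ω | K ω = k}).toReal)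
    -- treatment and censoring models with positivity
    (b : 𝒳 → ℝ) (c : ℕ → 𝒳 → ℝ)
    (hb : ∀ x, b x = (μ[|{ω | X ω = x}] {ω | A ω = 1}).toReal)
    (hc : ∀ a x, c a x = (μ[|{ω | A ω = a ∧ X ω = x}] {ω | Δ ω = 1}).toReal)
    (hbpos : ∀ x, μ {ω | X ω = x} ≠ 0 → b x ∈ Set.Ioo (0 : ℝ) 1)
    (hcpos : ∀ a x, a ≤ 1 → μ {ω | X ω = x} ≠ 0 → c a x ∈ Set.Ioo (0 : ℝ) 1)
    -- balanced weights
    (w : ℕ → ℕ → 𝒳 → ℝ)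
    (hbal : ∀ x, μ {ω | X ω = x} ≠ 0 →
      ((1 - c 0 x) * (1 - b x) * w 0 0 x = c 0 x * (1 - b x) * w 1 0 x ∧
       c 0 x * (1 - b x) * w 1 0 x = (1 - c 1 x) * b x * w 0 1 x ∧
       (1 - c 1 x) * b x * w 0 1 x = c 1 x * b x * w 1 1 x)) :
    ∀ k ∈ Finset.Icc 1 κ, ∀ u : 𝒳 → ℝ, (∃ C, ∀ x, |u x| ≤ C) → ∀ mt : 𝒳 → ℝ,
      ∫ ω, (if K ω = k then (1 : ℝ) else 0) * (Δ ω : ℝ) * w (Δ ω) (A ω) (X ω) *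
          (2 * (A ω : ℝ) - 1) * u (X ω) *
          (Y ω - (A ω : ℝ) * γ k (X ω) - mt (X ω)) ∂μ = 0 := by
  intro k hk u _hu mt
  classical
  -- sets
  set S : ℕ → 𝒳 → Set Ω := fun a x => {ω | X ω = x ∧ A ω = a ∧ K ω = k ∧ Δ ω = 1} with hSdef
  set g : ℕ → 𝒳 → Ω → ℝ := fun a x ω =>
    w 1 a x * (2 * (a : ℝ) - 1) * u x * (Ycf a k ω - (a : ℝ) * γ k x - mt x) with hgdef
  have hmX : ∀ x : 𝒳, MeasurableSet {ω | X ω = x} := fun x => hX (measurableSet_singleton x)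
  have hmA : ∀ a : ℕ, MeasurableSet {ω | A ω = a} := fun a => hA (measurableSet_singleton a)
  have hmΔ : ∀ d : ℕ, MeasurableSet {ω | Δ ω = d} := fun d => hΔ (measurableSet_singleton d)
  have hmK : ∀ j : ℕ, MeasurableSet {ω | K ω = j} := fun j => hK (measurableSet_singleton j)
  have hmS : ∀ a x, MeasurableSet (S a x) := by
    intro a x
    have : S a x = {ω | X ω = x} ∩ ({ω | A ω = a} ∩ ({ω | K ω = k} ∩ {ω | Δ ω = 1})) := rfl
    rw [this]
    exact (hmX x).inter ((hmA a).inter ((hmK k).inter (hmΔ 1)))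
  -- consistency collapse
  have hYcoll : ∀ ω, Δ ω = 1 → K ω = k → Y ω = Ycf (A ω) k ω := by
    intro ω _ hKk
    rw [hcons ω]
    have hIcc : ∀ k', k' ∈ Finset.Icc 1 κ →
        (if A ω = (A ω) then (1:ℝ) else 0) * (if K ω = k' then (1:ℝ) else 0) * Ycf (A ω) k' ω
          = (if k = k' then Ycf (A ω) k' ω else 0) := by
      intro k' _
      simp [hKk, eq_comm]
    rcases Nat.le_one_iff_eq_zero_or_eq_one.mp (hA01 ω) with ha | ha <;>
    · rw [show Finset.range 2 = {0, 1} by rfl]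
      simp only [Finset.sum_insert, Finset.mem_singleton, Finset.sum_singleton,
        Finset.sum_pair (by norm_num : (0:ℕ) ≠ 1)]
      rw [ha]
      simp only [Nat.one_ne_zero, Nat.zero_ne_one, if_false, if_true, zero_mul, mul_zero,
        ite_self, Finset.sum_const_zero, hKk]
      simp [hKk, Finset.sum_ite_eq (Finset.Icc 1 κ) k, hk, mul_comm]
  -- pointwise decomposition
  have hpt : ∀ ω, (if K ω = k then (1 : ℝ) else 0) * (Δ ω : ℝ) * w (Δ ω) (A ω) (X ω) *
          (2 * (A ω : ℝ) - 1) * u (X ω) *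
          (Y ω - (A ω : ℝ) * γ k (X ω) - mt (X ω))
      = ∑ x : 𝒳, ((S 1 x).indicator (g 1 x) ω + (S 0 x).indicator (g 0 x) ω) := by
    intro ω
    rw [Finset.sum_eq_single (X ω)]
    · by_cases hδ : Δ ω = 1
      · by_cases hKk : K ω = k
        · rcases Nat.le_one_iff_eq_zero_or_eq_one.mp (hA01 ω) with ha | ha
          · have h1 : ω ∉ S 1 (X ω) := by simp [hSdef, ha]
            have h0 : ω ∈ S 0 (X ω) := ⟨rfl, ha, hKk, hδ⟩
            rw [Set.indicator_of_notMem h1, Set.indicator_of_mem h0, zero_add,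
              hYcoll ω hδ hKk, hgdef, hδ, ha, hKk]
            simp only [if_true]
            push_cast
            ring
          · have h1 : ω ∈ S 1 (X ω) := ⟨rfl, ha, hKk, hδ⟩
            have h0 : ω ∉ S 0 (X ω) := by simp [hSdef, ha]
            rw [Set.indicator_of_mem h1, Set.indicator_of_notMem h0, add_zero,
              hYcoll ω hδ hKk, hgdef, hδ, ha, hKk]
            simp only [if_true]
            push_cast
            ring
        · have h1 : ω ∉ S 1 (X ω) := by simp [hSdef, hKk]
          have h0 : ω ∉ S 0 (X ω) := by simp [hSdef, hKk]
          rw [Set.indicator_of_notMem h1, Set.indicator_of_notMem h0, if_neg hKk]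
          ring
      · have hδ0 : Δ ω = 0 := by have := hΔ01 ω; omega
        have h1 : ω ∉ S 1 (X ω) := by simp [hSdef, hδ]
        have h0 : ω ∉ S 0 (X ω) := by simp [hSdef, hδ]
        rw [Set.indicator_of_notMem h1, Set.indicator_of_notMem h0, hδ0]
        push_cast
        ring
    · intro x _ hx
      have h1 : ω ∉ S 1 x := fun h => hx h.1.symm
      have h0 : ω ∉ S 0 x := fun h => hx h.1.symm
      rw [Set.indicator_of_notMem h1, Set.indicator_of_notMem h0, add_zero]
    · intro h
      exact absurd (Finset.mem_univ (X ω)) h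
  -- integrability of pieces
  have hgint : ∀ a x, Integrable (g a x) μ := by
    intro a x
    have h1 : Integrable (fun ω => w 1 a x * (2 * (a : ℝ) - 1) * u x * Ycf a k ω) μ :=
      (hYint a k).const_mul _
    have h2 := h1.sub (integrable_const
      (w 1 a x * (2 * (a : ℝ) - 1) * u x * ((a : ℝ) * γ k x + mt x)))
    refine h2.congr ?_
    filter_upwards with ω
    simp only [Pi.sub_apply, hgdef]
    ring
  have hindint : ∀ a x, Integrable ((S a x).indicator (g a x)) μ := fun a x =>
    (hgint a x).indicator (hmS a x)
  -- rewrite the integral as a finite sum of set integrals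
  have hsplit : ∫ ω, (if K ω = k then (1 : ℝ) else 0) * (Δ ω : ℝ) * w (Δ ω) (A ω) (X ω) *
          (2 * (A ω : ℝ) - 1) * u (X ω) *
          (Y ω - (A ω : ℝ) * γ k (X ω) - mt (X ω)) ∂μ
      = ∑ x : 𝒳, ((∫ ω in S 1 x, g 1 x ω ∂μ) + (∫ ω in S 0 x, g 0 x ω ∂μ)) := by
    rw [integral_congr_ae (Filter.Eventually.of_forall hpt),
      integral_finset_sum (f := fun x (ω : Ω) =>
          (S 1 x).indicator (g 1 x) ω + (S 0 x).indicator (g 0 x) ω)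
        Finset.univ (fun x _ => (hindint 1 x).add (hindint 0 x))]
    refine Finset.sum_congr rfl fun x _ => ?_
    rw [integral_add (hindint 1 x) (hindint 0 x),
      integral_indicator (hmS 1 x), integral_indicator (hmS 0 x)]
  rw [hsplit]
  refine Finset.sum_eq_zero fun x _ => ?_
  -- per-x analysis
  by_cases hEx : μ {ω | X ω = x} = 0
  · have hz : ∀ a : ℕ, μ (S a x) = 0 := fun a =>
      measure_mono_null (fun ω h => h.1) hEx
    rw [Measure.restrict_eq_zero.2 (hz 1), Measure.restrict_eq_zero.2 (hz 0),
      integral_zero_measure, integral_zero_measure, add_zero]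
  · -- notation
    set E : Set Ω := {ω | X ω = x} with hEdef
    have hμEfin : μ E ≠ ⊤ := measure_ne_top μ E
    set px : ℝ := (μ E).toReal with hpx
    have hpx_pos : 0 < px := ENNReal.toReal_pos hEx hμEfin
    have hbx := hbpos x hEx
    have hc0 := hcpos 0 x (by norm_num) hEx
    have hc1 := hcpos 1 x (by norm_num) hEx
    -- P(X=x, A=a)
    have hEA1 : (μ (E ∩ {ω | A ω = 1})).toReal = px * b x := by
      have h2 := hb x
      rw [cond_apply (hmX x) μ {ω | A ω = 1}, ENNReal.toReal_mul, ENNReal.toReal_inv,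
        ← hpx] at h2
      rw [h2]
      field_simp
      rfl
    have hsplitE : (μ (E ∩ {ω | A ω = 0})).toReal + (μ (E ∩ {ω | A ω = 1})).toReal = px := by
      have hdisj : Disjoint (E ∩ {ω | A ω = 0}) (E ∩ {ω | A ω = 1}) := by
        refine Set.disjoint_left.mpr fun ω h0 h1 => ?_
        have := h0.2; have := h1.2; simp_all
      have hunion : (E ∩ {ω | A ω = 0}) ∪ (E ∩ {ω | A ω = 1}) = E := by
        ext ω
        simp only [Set.mem_union, Set.mem_inter_iff, Set.mem_setOf_eq]
        rcases Nat.le_one_iff_eq_zero_or_eq_one.mp (hA01 ω) with h | h <;> simp [h, hEdef]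
      rw [← ENNReal.toReal_add (measure_ne_top _ _) (measure_ne_top _ _),
        ← measure_union hdisj ((hmX x).inter (hmA 1)), hunion]
    have hEA0 : (μ (E ∩ {ω | A ω = 0})).toReal = px * (1 - b x) := by
      rw [hEA1] at hsplitE; linarith
    -- β a
    have hEA : ∀ a, a ≤ 1 → (μ (E ∩ {ω | A ω = a})).toReal
        = px * (if a = 1 then b x else 1 - b x) := by
      intro a ha
      interval_cases a
      · simpa using hEA0
      · simpa using hEA1
    have hβpos : ∀ a, a ≤ 1 → 0 < (if a = 1 then b x else 1 - b x) := by
      intro a ha; interval_cases a <;> simp [hbx.1, hbx.2] <;> linarith [hbx.2]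
    have hEAne : ∀ a, a ≤ 1 → μ (E ∩ {ω | A ω = a}) ≠ 0 := by
      intro a ha h0
      have := hEA a ha
      rw [h0] at this
      simp only [ENNReal.toReal_zero] at this
      nlinarith [hβpos a ha]
    -- P(X=x, A=a, Δ=1)
    have hT : ∀ a, a ≤ 1 → (μ {ω | X ω = x ∧ A ω = a ∧ Δ ω = 1}).toReal
        = px * (if a = 1 then b x else 1 - b x) * c a x := by
      intro a ha
      have hcs := hc a x
      have hset : {ω | A ω = a ∧ X ω = x} = E ∩ {ω | A ω = a} := by
        ext ω; simp only [Set.mem_inter_iff, Set.mem_setOf_eq, hEdef]; tauto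
      rw [hset, cond_apply ((hmX x).inter (hmA a)) μ, ENNReal.toReal_mul,
        ENNReal.toReal_inv] at hcs
      have hset2 : E ∩ {ω | A ω = a} ∩ {ω | Δ ω = 1} = {ω | X ω = x ∧ A ω = a ∧ Δ ω = 1} := by
        ext ω; simp only [Set.mem_inter_iff, Set.mem_setOf_eq, hEdef]; tauto
      rw [hset2] at hcs
      have hne : (μ (E ∩ {ω | A ω = a})).toReal ≠ 0 :=
        ne_of_gt (by rw [hEA a ha]; exact mul_pos hpx_pos (hβpos a ha))
      have hβ := hβpos a ha
      have hne' : px * (if a = 1 then b x else 1 - b x) ≠ 0 :=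
        ne_of_gt (mul_pos hpx_pos hβ)
      rw [hEA a ha] at hcs
      rw [hcs, ← mul_assoc, mul_inv_cancel₀ hne', one_mul]
    have hTne : ∀ a, a ≤ 1 → μ {ω | X ω = x ∧ A ω = a ∧ Δ ω = 1} ≠ 0 := by
      intro a ha h0
      have := hT a ha
      rw [h0] at this
      simp only [ENNReal.toReal_zero] at this
      have hcp := hcpos a x ha hEx
      have := mul_pos (mul_pos hpx_pos (hβpos a ha)) hcp.1
      linarith
    -- pk
    set pk : ℝ := (μ[|E] {ω | K ω = k}).toReal with hpkdef
    have hpk_nonneg : 0 ≤ pk := ENNReal.toReal_nonneg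
    -- P(S a x)
    have hmT : ∀ a, MeasurableSet {ω | X ω = x ∧ A ω = a ∧ Δ ω = 1} := by
      intro a
      have : {ω | X ω = x ∧ A ω = a ∧ Δ ω = 1}
          = {ω | X ω = x} ∩ ({ω | A ω = a} ∩ {ω | Δ ω = 1}) := rfl
      rw [this]; exact (hmX x).inter ((hmA a).inter (hmΔ 1))
    have hPS : ∀ a, a ≤ 1 → (μ (S a x)).toReal
        = px * (if a = 1 then b x else 1 - b x) * c a x * pk := by
      intro a ha
      have hex := hexo x a 1 k (hTne a ha)
      rw [cond_apply (hmT a) μ, ENNReal.toReal_mul, ENNReal.toReal_inv] at hex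
      have hset : {ω | X ω = x ∧ A ω = a ∧ Δ ω = 1} ∩ {ω | K ω = k} = S a x := by
        ext ω; simp only [Set.mem_inter_iff, Set.mem_setOf_eq, hSdef]; tauto
      rw [hset] at hex
      have hTne' : (μ {ω | X ω = x ∧ A ω = a ∧ Δ ω = 1}).toReal ≠ 0 :=
        ne_of_gt (by rw [hT a ha]
                     exact mul_pos (mul_pos hpx_pos (hβpos a ha)) (hcpos a x ha hEx).1)
      rw [← hpkdef] at hex
      rw [← hT a ha]
      field_simp at hex
      nlinarith [hex]
    -- conditional means
    set m1 : ℝ := ∫ ω, Ycf 1 k ω ∂(μ[|E]) with hm1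
    set m0 : ℝ := ∫ ω, Ycf 0 k ω ∂(μ[|E]) with hm0
    have hblip : γ k x = m1 - m0 := by
      rw [hγ k x, integral_sub (aux_cond_integrable (hYint 1 k) hEx)
        (aux_cond_integrable (hYint 0 k) hEx)]
    have hI : ∀ a, a ≤ 1 → (∫ ω in S a x, Ycf a k ω ∂μ)
        = (μ (S a x)).toReal * (∫ ω, Ycf a k ω ∂(μ[|E])) := by
      intro a ha
      by_cases hS0 : μ (S a x) = 0
      · rw [Measure.restrict_eq_zero.2 hS0, integral_zero_measure, hS0]
        simp
      · have hn := hnuc a k ha hk x a k 1 hS0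
        rw [aux_cond_integral μ (S a x) (Ycf a k)] at hn
        rw [ENNReal.toReal_inv] at hn
        have hSfin : (μ (S a x)).toReal ≠ 0 :=
          ENNReal.toReal_ne_zero.mpr ⟨hS0, measure_ne_top _ _⟩
        rw [← hn, ← mul_assoc, mul_inv_cancel₀ hSfin, one_mul]
    -- set integrals of g
    have hIg : ∀ a, a ≤ 1 → (∫ ω in S a x, g a x ω ∂μ)
        = w 1 a x * (2 * (a : ℝ) - 1) * u x *
            ((μ (S a x)).toReal * (∫ ω, Ycf a k ω ∂(μ[|E]))
              - ((a : ℝ) * γ k x + mt x) * (μ (S a x)).toReal) := by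
      intro a ha
      have hcongr : ∀ ω, g a x ω = w 1 a x * (2 * (a : ℝ) - 1) * u x *
          (Ycf a k ω - ((a : ℝ) * γ k x + mt x)) := by
        intro ω; simp only [hgdef]; ring
      rw [setIntegral_congr_fun (hmS a x) (fun ω _ => hcongr ω), integral_const_mul,
        integral_sub ((hYint a k).restrict) (integrable_const _), setIntegral_const,
        hI a ha, smul_eq_mul, measureReal_def]
      ring
    rw [hIg 1 (by norm_num), hIg 0 (by norm_num), hPS 1 (by norm_num), hPS 0 (by norm_num),
      ← hm1, ← hm0, hblip]
    have hbal2 : c 0 x * (1 - b x) * w 1 0 x = c 1 x * b x * w 1 1 x :=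
      (hbal x hEx).2.1.trans (hbal x hEx).2.2
    norm_num
    linear_combination (-(u x * (m0 - mt x) * px * pk)) * hbal2
end

section
/- Assume the competing-risks potential-outcome setup, and assume the factorization E[Y(a,k)·1(K=k')|X=x] = P(K=k'|X=x)·E[Y(a,k)|X=x] for all a, k, k' and all x with P(X=x) > 0. Then for every rule d : 𝒳 → {0,1}, the value of d satisfies E[Σ_{k=1}^{κ} 1(K=k)·Y(d(X),k)] = E[Σ_{k=1}^{κ} P(K=k|X)·(m_k(X) + d(X)·γ_k(X))], where m_k(x) = E[Y(0,k)|X=x] is the treatment-free mean and γ_k(x) = E[Y(1,k) − Y(0,k)|X=x] is the blip for cause k. -/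
open MeasureTheory ProbabilityTheory

private lemma cond_integrable {Ω : Type*} [MeasurableSpace Ω] (μ : Measure Ω)
    [IsFiniteMeasure μ] {s : Set Ω} (hs : μ s ≠ 0) {f : Ω → ℝ}
    (hf : Integrable f μ) : Integrable f (μ[|s]) := by
  show Integrable f ((μ s)⁻¹ • μ.restrict s)
  exact (hf.restrict).smul_measure (ENNReal.inv_ne_top.mpr hs)

private lemma cond_scale {Ω : Type*} [MeasurableSpace Ω] (μ : Measure Ω)
    [IsFiniteMeasure μ] (s : Set Ω) (f : Ω → ℝ) :
    (μ s).toReal * ∫ ω, f ω ∂(μ[|s]) = ∫ ω in s, f ω ∂μ := by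
  show (μ s).toReal * ∫ ω, f ω ∂((μ s)⁻¹ • μ.restrict s) = _
  rw [integral_smul_measure, ENNReal.toReal_inv, smul_eq_mul]
  rcases eq_or_ne (μ s) 0 with h | h
  · rw [h]
    simp [Measure.restrict_eq_zero.mpr h]
  · rw [← mul_assoc, mul_inv_cancel₀ (ENNReal.toReal_ne_zero.mpr ⟨h, measure_ne_top μ s⟩),
      one_mul]

/-- Partition an integral over a finite-valued covariate. -/
private lemma part_integral {Ω 𝒳 : Type*} [MeasurableSpace Ω] [Fintype 𝒳]
    [MeasurableSpace 𝒳] [MeasurableSingletonClass 𝒳] (μ : Measure Ω) [IsFiniteMeasure μ]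
    (X : Ω → 𝒳) (hX : Measurable X) (f : Ω → ℝ) (hf : Integrable f μ) :
    ∫ ω, f ω ∂μ = ∑ x : 𝒳, (μ {ω | X ω = x}).toReal * ∫ ω, f ω ∂(μ[|{ω | X ω = x}]) := by
  have hsm : ∀ x : 𝒳, MeasurableSet {ω | X ω = x} := fun x => hX (measurableSet_singleton x)
  have h1 : ∀ ω, f ω = ∑ x : 𝒳, Set.indicator {ω | X ω = x} f ω := by
    intro ω
    rw [Finset.sum_eq_single (X ω)]
    · exact (Set.indicator_of_mem (show ω ∈ {ω' | X ω' = X ω} from rfl) f).symm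
    · intro b _ hb
      exact Set.indicator_of_notMem
        (fun (h : ω ∈ {ω' | X ω' = b}) => hb ((show X ω = b from h).symm)) f
    · exact fun h => absurd (Finset.mem_univ _) h
  calc ∫ ω, f ω ∂μ = ∫ ω, ∑ x : 𝒳, Set.indicator {ω | X ω = x} f ω ∂μ :=
        integral_congr_ae (Filter.Eventually.of_forall h1)
    _ = ∑ x : 𝒳, ∫ ω, Set.indicator {ω | X ω = x} f ω ∂μ :=
        integral_finset_sum _ (fun x _ => hf.indicator (hsm x))
    _ = ∑ x : 𝒳, ∫ ω in {ω | X ω = x}, f ω ∂μ := by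
        refine Finset.sum_congr rfl fun x _ => ?_
        exact integral_indicator (hsm x)
    _ = ∑ x : 𝒳, (μ {ω | X ω = x}).toReal * ∫ ω, f ω ∂(μ[|{ω | X ω = x}]) := by
        refine Finset.sum_congr rfl fun x _ => ?_
        exact (cond_scale μ _ f).symm

/-- In the competing-risks potential-outcome setup with the factorization
`E[Y(a,k)·1(K=k')|X=x] = P(K=k'|X=x)·E[Y(a,k)|X=x]`, the value of any rule
`d : 𝒳 → {0,1}` satisfies
`E[Σₖ 1(K=k)·Y(d(X),k)] = E[Σₖ P(K=k|X)·(m_k(X) + d(X)·γ_k(X))]`, where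
`m_k(x) = E[Y(0,k)|X=x]` and `γ_k(x) = E[Y(1,k) − Y(0,k)|X=x]`. -/
theorem value_identity
    {Ω 𝒳 : Type*} [MeasurableSpace Ω] [Fintype 𝒳] [MeasurableSpace 𝒳]
    [MeasurableSingletonClass 𝒳]
    (μ : Measure Ω) [IsProbabilityMeasure μ]
    (κ : ℕ) (X : Ω → 𝒳) (K : Ω → ℕ) (Ycf : ℕ → ℕ → Ω → ℝ)
    (hX : Measurable X) (hK : Measurable K)
    (hYcf : ∀ a k, Measurable (Ycf a k)) (hYint : ∀ a k, Integrable (Ycf a k) μ)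
    (hKκ : ∀ ω, K ω ∈ Finset.Icc 1 κ)
    -- cause probabilities, treatment-free means, and blips
    (φ : ℕ → 𝒳 → ℝ) (m : ℕ → 𝒳 → ℝ) (γ : ℕ → 𝒳 → ℝ)
    (hφ : ∀ k x, φ k x = (μ[|{ω | X ω = x}] {ω | K ω = k}).toReal)
    (hm : ∀ k x, m k x = ∫ ω, Ycf 0 k ω ∂(μ[|{ω | X ω = x}]))
    (hγ : ∀ k x, γ k x = ∫ ω, (Ycf 1 k ω - Ycf 0 k ω) ∂(μ[|{ω | X ω = x}]))
    -- factorization: E[Y(a,k)·1(K=k')|X=x] = P(K=k'|X=x)·E[Y(a,k)|X=x]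
    (hfact : ∀ a k k' x, a ≤ 1 → k ∈ Finset.Icc 1 κ → k' ∈ Finset.Icc 1 κ →
      μ {ω | X ω = x} ≠ 0 →
      (∫ ω, Ycf a k ω * (if K ω = k' then (1 : ℝ) else 0) ∂(μ[|{ω | X ω = x}])) =
        φ k' x * ∫ ω, Ycf a k ω ∂(μ[|{ω | X ω = x}]))
    (d : 𝒳 → ℕ) (hd : ∀ x, d x ≤ 1) :
    ∫ ω, ∑ k ∈ Finset.Icc 1 κ,
        (if K ω = k then (1 : ℝ) else 0) * Ycf (d (X ω)) k ω ∂μ =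
      ∫ ω, ∑ k ∈ Finset.Icc 1 κ,
        φ k (X ω) * (m k (X ω) + (d (X ω) : ℝ) * γ k (X ω)) ∂μ := by
  have hsm : ∀ x : 𝒳, MeasurableSet {ω | X ω = x} := fun x => hX (measurableSet_singleton x)
  have hKm : ∀ k : ℕ, MeasurableSet {ω | K ω = k} := fun k => hK (measurableSet_singleton k)
  set f₁ : Ω → ℝ := fun ω => ∑ k ∈ Finset.Icc 1 κ,
      (if K ω = k then (1 : ℝ) else 0) * Ycf (d (X ω)) k ω with hf₁
  set f₂ : Ω → ℝ := fun ω => ∑ k ∈ Finset.Icc 1 κ,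
      φ k (X ω) * (m k (X ω) + (d (X ω) : ℝ) * γ k (X ω)) with hf₂
  -- integrability of f₁
  have hint1 : Integrable f₁ μ := by
    refine integrable_finset_sum _ fun k _ => ?_
    have : (fun ω => (if K ω = k then (1 : ℝ) else 0) * Ycf (d (X ω)) k ω) =
        fun ω => ∑ x : 𝒳, Set.indicator ({ω | X ω = x} ∩ {ω | K ω = k})
          (Ycf (d x) k) ω := by
      funext ω
      rw [Finset.sum_eq_single (X ω)]
      · by_cases h : K ω = k
        · rw [Set.indicator_of_mem
            (show ω ∈ {ω' | X ω' = X ω} ∩ {ω' | K ω' = k} from ⟨rfl, h⟩), if_pos h, one_mul]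
        · rw [Set.indicator_of_notMem
            (fun (hc : ω ∈ {ω' | X ω' = X ω} ∩ {ω' | K ω' = k}) => h hc.2), if_neg h, zero_mul]
      · intro b _ hb
        exact Set.indicator_of_notMem
          (fun (h : ω ∈ {ω' | X ω' = b} ∩ {ω' | K ω' = k}) => hb ((show X ω = b from h.1).symm)) _
      · exact fun h => absurd (Finset.mem_univ _) h
    rw [this]
    exact integrable_finset_sum _ fun x _ =>
      (hYint (d x) k).indicator ((hsm x).inter (hKm k))
  -- integrability of f₂ (factors through the finite type 𝒳)
  have hint2 : Integrable f₂ μ := by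
    have hmeas : Measurable f₂ := by
      have : f₂ = (fun x : 𝒳 => ∑ k ∈ Finset.Icc 1 κ,
          φ k x * (m k x + (d x : ℝ) * γ k x)) ∘ X := rfl
      rw [this]
      exact (measurable_of_countable _).comp hX
    obtain ⟨C, hC⟩ : ∃ C : ℝ, ∀ ω, ‖f₂ ω‖ ≤ C := by
      rcases isEmpty_or_nonempty 𝒳 with h | h
      · exact ⟨0, fun ω => (IsEmpty.false (X ω)).elim⟩
      · classical
        obtain ⟨x₀, hx₀⟩ := Finset.exists_max_image (Finset.univ : Finset 𝒳)
          (fun x => ‖∑ k ∈ Finset.Icc 1 κ, φ k x * (m k x + (d x : ℝ) * γ k x)‖)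
          ⟨Classical.arbitrary 𝒳, Finset.mem_univ _⟩
        exact ⟨_, fun ω => hx₀.2 (X ω) (Finset.mem_univ _)⟩
    exact (integrable_const C).mono' hmeas.aestronglyMeasurable
      (Filter.Eventually.of_forall hC)
  rw [part_integral μ X hX f₁ hint1, part_integral μ X hX f₂ hint2]
  refine Finset.sum_congr rfl fun x _ => ?_
  rcases eq_or_ne (μ {ω | X ω = x}) 0 with hx | hx
  · rw [hx]; simp
  · congr 1
    set ν := μ[|{ω | X ω = x}] with hν
    have hPM : IsProbabilityMeasure ν := cond_isProbabilityMeasure hx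
    have haeX : ∀ᵐ ω ∂ν, X ω = x := by
      rw [hν]
      exact Measure.ae_smul_measure (ae_restrict_mem (hsm x)) _
    have hνint : ∀ a k, Integrable (Ycf a k) ν :=
      fun a k => cond_integrable μ hx (hYint a k)
    -- key computation of conditional means
    have hkey : ∀ k, ∫ ω, Ycf (d x) k ω ∂ν = m k x + (d x : ℝ) * γ k x := by
      intro k
      rcases Nat.le_one_iff_eq_zero_or_eq_one.mp (hd x) with h | h <;> rw [h]
      · simp [hm k x, hν]
      · rw [hm k x, hγ k x, ← hν, integral_sub (hνint 1 k) (hνint 0 k)]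
        push_cast
        ring
    -- LHS over the conditional measure
    have hL : ∫ ω, f₁ ω ∂ν =
        ∑ k ∈ Finset.Icc 1 κ, ∫ ω, Ycf (d x) k ω * (if K ω = k then (1:ℝ) else 0) ∂ν := by
      have h1 : ∫ ω, f₁ ω ∂ν = ∫ ω, ∑ k ∈ Finset.Icc 1 κ,
          Ycf (d x) k ω * (if K ω = k then (1:ℝ) else 0) ∂ν := by
        refine integral_congr_ae ?_
        filter_upwards [haeX] with ω hω
        rw [hf₁]
        simp only [hω]
        exact Finset.sum_congr rfl fun k _ => mul_comm _ _
      rw [h1]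
      refine integral_finset_sum _ fun k _ => ?_
      have : (fun ω => Ycf (d x) k ω * (if K ω = k then (1:ℝ) else 0)) =
          Set.indicator {ω | K ω = k} (Ycf (d x) k) := by
        funext ω
        simp only [Set.indicator_apply, Set.mem_setOf_eq]
        by_cases h : K ω = k <;> simp [h]
      rw [this]
      exact (hνint (d x) k).indicator (hKm k)
    -- RHS over the conditional measure
    have hR : ∫ ω, f₂ ω ∂ν =
        ∑ k ∈ Finset.Icc 1 κ, φ k x * (m k x + (d x : ℝ) * γ k x) := by
      have h1 : ∫ ω, f₂ ω ∂ν = ∫ _ω, (∑ k ∈ Finset.Icc 1 κ,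
          φ k x * (m k x + (d x : ℝ) * γ k x)) ∂ν := by
        refine integral_congr_ae ?_
        filter_upwards [haeX] with ω hω
        rw [hf₂]; simp only [hω]
      rw [h1, integral_const, probReal_univ, one_smul]
    rw [hL, hR]
    refine Finset.sum_congr rfl fun k hk => ?_
    rw [hν, hfact (d x) k k x (hd x) hk hk hx, ← hν, hkey k]
end
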